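/- arXiv:2302.06017 — 5 statements merged into one kernel-verified Lean document; each statement's English description precedes it below -/
import Mathlib

section
/- Polynomial analogue of the Jacobi triple product identity: for all non-negative integers n, m and all q, x, \(\sum_{i=-n}^{m} q^{i^2} x^i \binom{n+m}{n+i}_{q^2} = (-q/x;q^2)_n\,(-qx;q^2)_m\), as an identity of Laurent polynomials in q and x. -/
/-
Both sides obey the same recursions. By the q-Pascal rule
`[N+1, b] = [N, b] + q^{N+1-b} [N, b-1]` (in base `q²`), raising `m` by one multiplies the sum by
`1 + q^{2m+1} x`: the first Pascal term reproduces the old sum and the second, after the shift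
`i ↦ i - 1`, reproduces it times `q^{2m+1} x`. The substitution `i ↦ -i` together with the symmetry
`[N, k] = [N, N-k]` shows that the sum is invariant under `(n, m, x) ↦ (m, n, x⁻¹)`, which turns
the recursion in `m` into one in `n`.
-/

open Finset

/-- The finite q-Pochhammer symbol `(a;q)_n`. -/
noncomputable def qPoch (a q : RatFunc ℚ) (n : ℕ) : RatFunc ℚ :=
  ∏ k ∈ Finset.range n, (1 - a * q ^ k)

/-- The q-binomial coefficient `[top choose bot]_q`, zero unless `0 ≤ bot ≤ top`. -/
noncomputable def qBinom (q : RatFunc ℚ) (top bot : ℤ) : RatFunc ℚ :=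
  if 0 ≤ bot ∧ bot ≤ top then
    qPoch q q top.toNat / (qPoch q q bot.toNat * qPoch q q (top - bot).toNat)
  else 0

/-- The Legendre symbol modulo 3. -/
def leg3 (j : ℤ) : ℤ := if j % 3 = 1 then 1 else if j % 3 = 2 then -1 else 0

/-- `1/(q;q)_k`, with the convention that it is zero for negative `k`. -/
noncomputable def invPoch (q : RatFunc ℚ) (k : ℤ) : RatFunc ℚ :=
  if 0 ≤ k then (qPoch q q k.toNat)⁻¹ else 0

/-- The generic variable `q` in the field of rational functions. -/
noncomputable def Xq : RatFunc ℚ := RatFunc.X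

lemma qPoch_zero (a q : RatFunc ℚ) : qPoch a q 0 = 1 :=
  prod_range_zero _

lemma qPoch_succ (a q : RatFunc ℚ) (n : ℕ) :
    qPoch a q (n + 1) = qPoch a q n * (1 - a * q ^ n) :=
  prod_range_succ _ _

section QBinom

variable {q : RatFunc ℚ}

lemma one_sub_mul_pow_ne_zero (hq : ∀ k : ℕ, q ^ (k + 1) ≠ 1) (k : ℕ) : 1 - q * q ^ k ≠ 0 := by
  rw [← pow_succ', sub_ne_zero]
  exact (hq k).symm

lemma qPoch_self_ne_zero (hq : ∀ k : ℕ, q ^ (k + 1) ≠ 1) (n : ℕ) : qPoch q q n ≠ 0 :=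
  prod_ne_zero_iff.2 fun k _ => one_sub_mul_pow_ne_zero hq k

lemma qBinom_eq_zero_of_notMem {N k : ℤ} (h : k ∉ Icc 0 N) : qBinom q N k = 0 :=
  if_neg (by rwa [mem_Icc] at h)

lemma qBinom_natCast_add (a b : ℕ) :
    qBinom q ((a : ℤ) + b) a = qPoch q q (a + b) / (qPoch q q a * qPoch q q b) := by
  rw [qBinom, if_pos (by omega), add_sub_cancel_left, ← Nat.cast_add, Int.toNat_natCast,
    Int.toNat_natCast, Int.toNat_natCast]

lemma qBinom_symm (N k : ℤ) : qBinom q N k = qBinom q N (N - k) := by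
  unfold qBinom
  rw [sub_sub_cancel, mul_comm (qPoch q q k.toNat)]
  exact if_congr (by omega) rfl rfl

lemma qBinom_zero_right (hq : ∀ k : ℕ, q ^ (k + 1) ≠ 1) {N : ℤ} (hN : 0 ≤ N) :
    qBinom q N 0 = 1 := by
  lift N to ℕ using hN
  simpa [qPoch_zero, div_self (qPoch_self_ne_zero hq N)] using qBinom_natCast_add (q := q) 0 N

lemma qBinom_self (hq : ∀ k : ℕ, q ^ (k + 1) ≠ 1) {N : ℤ} (hN : 0 ≤ N) : qBinom q N N = 1 := by
  rw [qBinom_symm, sub_self, qBinom_zero_right hq hN]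

lemma qBinom_succ_add_succ (hq : ∀ k : ℕ, q ^ (k + 1) ≠ 1) (a c : ℕ) :
    qBinom q ((a : ℤ) + 1 + (c + 1)) (a + 1) =
      qBinom q ((a : ℤ) + 1 + c) (a + 1) + q ^ (c + 1) * qBinom q ((a : ℤ) + (c + 1)) a := by
  have h₁ := qBinom_natCast_add (q := q) (a + 1) (c + 1)
  have h₂ := qBinom_natCast_add (q := q) (a + 1) c
  have h₃ := qBinom_natCast_add (q := q) a (c + 1)
  push_cast at h₁ h₂ h₃
  rw [h₁, h₂, h₃, show a + 1 + (c + 1) = a + c + 1 + 1 by ring, show a + 1 + c = a + c + 1 by ring,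
    show a + (c + 1) = a + c + 1 by ring, qPoch_succ q q (a + c + 1), qPoch_succ q q a,
    qPoch_succ q q c]
  have := qPoch_self_ne_zero hq a
  have := qPoch_self_ne_zero hq c
  have := qPoch_self_ne_zero hq (a + c + 1)
  have := one_sub_mul_pow_ne_zero hq a
  have := one_sub_mul_pow_ne_zero hq c
  field_simp
  ring

lemma qBinom_succ (hq : ∀ k : ℕ, q ^ (k + 1) ≠ 1) {N : ℤ} (hN : 0 ≤ N) (b : ℤ) :
    qBinom q (N + 1) b = qBinom q N b + q ^ (N + 1 - b) * qBinom q N (b - 1) := by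
  by_cases hb : b ∈ Icc 1 N
  · rw [mem_Icc] at hb
    obtain ⟨a, rfl⟩ : ∃ a : ℕ, b = a + 1 := ⟨(b - 1).toNat, by omega⟩
    obtain ⟨c, rfl⟩ : ∃ c : ℕ, N = a + 1 + c := ⟨(N - a - 1).toNat, by omega⟩
    rw [show (a : ℤ) + 1 + c + 1 - (a + 1) = ((c + 1 : ℕ) : ℤ) by push_cast; ring, zpow_natCast,
      add_sub_cancel_right, add_assoc _ (c : ℤ), qBinom_succ_add_succ hq]
    ring_nf
  rw [mem_Icc] at hb
  rcases (by omega : b = 0 ∨ b = N + 1 ∨ b < 0 ∨ N + 1 < b) with rfl | rfl | hb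
  · rw [qBinom_zero_right hq (by omega), qBinom_zero_right hq hN,
      qBinom_eq_zero_of_notMem (by simp)]
    ring
  · rw [qBinom_self hq (by omega), qBinom_eq_zero_of_notMem (by simp), sub_self, zpow_zero,
      add_sub_cancel_right, qBinom_self hq hN]
    ring
  · rw [qBinom_eq_zero_of_notMem, qBinom_eq_zero_of_notMem, qBinom_eq_zero_of_notMem] <;>
      simp <;> omega

end QBinom

lemma sum_Icc_mul_qBinom_of_le (q : RatFunc ℚ) (f : ℤ → RatFunc ℚ) {n m a b : ℤ} (ha : a ≤ -n)
    (hb : m ≤ b) :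
    ∑ i ∈ Icc a b, f i * qBinom q (n + m) (n + i) =
      ∑ i ∈ Icc (-n) m, f i * qBinom q (n + m) (n + i) := by
  refine (sum_subset (Icc_subset_Icc ha hb) fun i _ hi => ?_).symm
  rw [qBinom_eq_zero_of_notMem, mul_zero]
  simp only [mem_Icc] at hi ⊢
  omega

noncomputable def tripleProductSum (q x : RatFunc ℚ) (n m : ℕ) : RatFunc ℚ :=
  ∑ i ∈ Icc (-(n : ℤ)) m, q ^ (i ^ 2) * x ^ i * qBinom (q ^ 2) ((n : ℤ) + m) ((n : ℤ) + i)

section TripleProductSum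

variable {q x : RatFunc ℚ}

lemma tripleProductSum_zero_zero : tripleProductSum q x 0 0 = 1 := by
  simp [tripleProductSum, qBinom, qPoch_zero]

lemma tripleProductSum_swap (n m : ℕ) :
    tripleProductSum q x n m = tripleProductSum q x⁻¹ m n := by
  refine sum_nbij' (fun i => -i) (fun i => -i) ?_ ?_ (fun _ _ => neg_neg _)
    (fun _ _ => neg_neg _) ?_
  · intro i hi
    simp only [mem_Icc] at hi ⊢
    omega
  · intro i hi
    simp only [mem_Icc] at hi ⊢
    omega
  · intro i _
    rw [neg_sq, inv_zpow', neg_neg, qBinom_symm, add_comm (m : ℤ)]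
    ring_nf

lemma tripleProductSum_succ_right (hq₀ : q ≠ 0) (hq : ∀ k : ℕ, q ^ (k + 1) ≠ 1) (hx : x ≠ 0)
    (n m : ℕ) :
    tripleProductSum q x n (m + 1) = (1 + q ^ (2 * m + 1) * x) * tripleProductSum q x n m := by
  have hq₂ : ∀ k : ℕ, (q ^ 2) ^ (k + 1) ≠ 1 := fun k => by
    rw [← pow_mul, show 2 * (k + 1) = 2 * k + 1 + 1 by ring]
    exact hq _
  have hpascal : ∀ i : ℤ, qBinom (q ^ 2) (n + (m + 1)) (n + i) =
      qBinom (q ^ 2) (n + m) (n + i) +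
        (q ^ 2) ^ (m + 1 - i) * qBinom (q ^ 2) (n + m) (n + (i - 1)) := fun i => by
    rw [← add_assoc, qBinom_succ hq₂ (by positivity),
      show (n : ℤ) + m + 1 - (n + i) = m + 1 - i by ring,
      show (n : ℤ) + i - 1 = n + (i - 1) by ring]
  have hshift : ∀ j : ℤ, q ^ ((j + 1) ^ 2) * x ^ (j + 1) * ((q ^ 2) ^ ((m : ℤ) + 1 - (j + 1)) *
      qBinom (q ^ 2) (n + m) (n + (j + 1 - 1))) =
      q ^ (2 * m + 1) * x * (q ^ (j ^ 2) * x ^ j * qBinom (q ^ 2) (n + m) (n + j)) := fun j => by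
    have e : q ^ ((j + 1) ^ 2) * (q ^ 2) ^ ((m : ℤ) + 1 - (j + 1)) =
        q ^ (2 * m + 1) * q ^ (j ^ 2) := by
      rw [← zpow_natCast q 2, ← zpow_mul, ← zpow_natCast q (2 * m + 1), ← zpow_add₀ hq₀,
        ← zpow_add₀ hq₀]
      congr 1
      push_cast
      ring
    rw [zpow_add_one₀ hx, add_sub_cancel_right]
    linear_combination (x * x ^ j * qBinom (q ^ 2) (n + m) (n + j)) * e
  unfold tripleProductSum
  push_cast
  simp_rw [hpascal, mul_add, sum_add_distrib]
  rw [sum_Icc_mul_qBinom_of_le _ (fun i => q ^ (i ^ 2) * x ^ i) le_rfl (by omega),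
    show Icc (-(n : ℤ)) (m + 1) = (Icc (-(n : ℤ) - 1) m).map (addRightEmbedding 1) by simp, sum_map]
  simp only [addRightEmbedding_apply, hshift]
  rw [← mul_sum,
    sum_Icc_mul_qBinom_of_le _ (fun i => q ^ (i ^ 2) * x ^ i) (a := -(n : ℤ) - 1) (by omega) le_rfl]
  ring

lemma tripleProductSum_eq_mul_qPoch (hq₀ : q ≠ 0) (hq : ∀ k : ℕ, q ^ (k + 1) ≠ 1) (hx : x ≠ 0)
    (n m : ℕ) : tripleProductSum q x n m = tripleProductSum q x n 0 * qPoch (-q * x) (q ^ 2) m := by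
  induction m with
  | zero => rw [qPoch_zero, mul_one]
  | succ m ih =>
    rw [tripleProductSum_succ_right hq₀ hq hx, ih, qPoch_succ]
    ring

end TripleProductSum

lemma Xq_pow_succ_ne_one (k : ℕ) : Xq ^ (k + 1) ≠ 1 := by
  intro h
  rw [Xq, ← RatFunc.algebraMap_X, ← map_pow,
    map_eq_one_iff _ (RatFunc.algebraMap_injective ℚ)] at h
  simpa using congrArg Polynomial.natDegree h

/-- Polynomial analogue of the Jacobi triple product identity: for `n, m ≥ 0`,
`∑_{i=-n}^{m} q^{i²} x^i [n+m choose n+i]_{q²} = (-q/x;q²)_n (-qx;q²)_m`,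
as an identity of rational functions (Laurent polynomials) in `q` and `x`. -/
theorem statement2 (n m : ℕ) :
    ∀ x : RatFunc ℚ, x ≠ 0 →
    ∑ i ∈ Finset.Icc (-(n : ℤ)) (m : ℤ),
      Xq ^ (i ^ 2) * x ^ i * qBinom (Xq ^ 2) ((n : ℤ) + m) ((n : ℤ) + i) =
    qPoch (-Xq / x) (Xq ^ 2) n * qPoch (-Xq * x) (Xq ^ 2) m := by
  intro x hx
  have hXq : Xq ≠ 0 := RatFunc.X_ne_zero
  calc tripleProductSum Xq x n m
      = tripleProductSum Xq x n 0 * qPoch (-Xq * x) (Xq ^ 2) m :=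
        tripleProductSum_eq_mul_qPoch hXq Xq_pow_succ_ne_one hx n m
    _ = tripleProductSum Xq x⁻¹ 0 0 * qPoch (-Xq * x⁻¹) (Xq ^ 2) n *
          qPoch (-Xq * x) (Xq ^ 2) m := by
        rw [tripleProductSum_swap,
          tripleProductSum_eq_mul_qPoch hXq Xq_pow_succ_ne_one (inv_ne_zero hx)]
    _ = qPoch (-Xq / x) (Xq ^ 2) n * qPoch (-Xq * x) (Xq ^ 2) m := by
        rw [tripleProductSum_zero_zero, one_mul, div_eq_mul_inv]
end

section
/- Eisenstein's formula for the Legendre symbol: for every odd prime p and every integer j, \(\left(\frac{j}{p}\right) = \prod_{n=1}^{(p-1)/2} \frac{\sin(2\pi n j/p)}{\sin(2\pi n/p)}\), where \(\left(\frac{j}{p}\right)\) denotes the Legendre symbol of j modulo p. -/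
/-!
Write `j * n ≡ ± r n (mod p)` with `1 ≤ r n ≤ (p - 1) / 2`. Since `sin` is odd and
`2π`-periodic, `sin (2π n j / p) = ± sin (2π r n / p)`. When `p ∤ j` the `r n` permute
`1, …, (p - 1) / 2`, so the product is `(-1) ^ μ` with `μ` the number of minus signs, which is
`(j / p)` by Gauss's lemma. When `p ∣ j` both sides vanish.
-/

open Finset Real

namespace ZMod

variable {p : ℕ}

lemma sin_two_pi_mul_div_eq_valMinAbs [NeZero p] (m : ℤ) :
    sin (2 * π * m / p) = sin (2 * π * (m : ZMod p).valMinAbs / p) := by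
  obtain ⟨k, hk⟩ : (p : ℤ) ∣ m - (m : ZMod p).valMinAbs :=
    (intCast_zmod_eq_zero_iff_dvd _ p).mp (by simp)
  have hk' : (m : ℝ) = (m : ZMod p).valMinAbs + p * k := by
    exact_mod_cast (by linarith : m = (m : ZMod p).valMinAbs + p * k)
  have hp : (p : ℝ) ≠ 0 := Nat.cast_ne_zero.mpr (NeZero.ne p)
  rw [hk', ← sin_add_int_mul_two_pi (2 * π * (m : ZMod p).valMinAbs / p) k]
  congr 1
  field_simp

lemma sin_two_pi_mul_valMinAbs_div [NeZero p] (a : ZMod p) :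
    sin (2 * π * a.valMinAbs / p) =
      (if p / 2 < a.val then -1 else 1) * sin (2 * π * a.valMinAbs.natAbs / p) := by
  rw [Nat.cast_natAbs, Int.cast_abs]
  split_ifs with h
  · have hneg : a.valMinAbs < 0 := by
      rw [← not_le, valMinAbs_nonneg_iff]; omega
    rw [abs_of_neg (by exact_mod_cast hneg), mul_neg, neg_div, sin_neg, neg_one_mul, neg_neg]
  · have hnonneg : 0 ≤ a.valMinAbs := (valMinAbs_nonneg_iff a).mpr (by omega)
    rw [abs_of_nonneg (by exact_mod_cast hnonneg), one_mul]

lemma prod_sin_two_pi_mul_natAbs_valMinAbs_div [Fact p.Prime] {a : ZMod p} (ha : a ≠ 0) :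
    ∏ x ∈ Ico 1 (p / 2).succ, sin (2 * π * (a * x).valMinAbs.natAbs / p) =
      ∏ x ∈ Ico 1 (p / 2).succ, sin (2 * π * x / p) := by
  have h := congrArg (fun s => (s.map fun y : ℕ => sin (2 * π * y / p)).prod)
    (Ico_map_valMinAbs_natAbs_eq_Ico_map_id p a ha)
  simpa only [Multiset.map_map, Multiset.map_id', Function.comp_def,
    ← Finset.prod_eq_multiset_prod] using h

end ZMod

lemma Real.sin_two_pi_mul_div_pos {x p : ℕ} (hx : 0 < x) (hxp : 2 * x < p) :
    0 < sin (2 * π * x / p) := by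
  have hp : (0 : ℝ) < p := by exact_mod_cast (by omega : 0 < p)
  have hxp' : (2 * x : ℝ) < p := by exact_mod_cast hxp
  apply sin_pos_of_pos_of_lt_pi
  · have : (0 : ℝ) < x := by exact_mod_cast hx
    positivity
  · rw [div_lt_iff₀ hp]
    nlinarith [pi_pos]

lemma prod_sin_two_pi_mul_div_eq_legendreSym_mul {p : ℕ} [Fact p.Prime] (hp2 : p ≠ 2) (j : ℤ) :
    ∏ n ∈ Ico 1 (p / 2).succ, sin (2 * π * n * j / p) =
      legendreSym p j * ∏ n ∈ Ico 1 (p / 2).succ, sin (2 * π * n / p) := by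
  have hnum (n : ℕ) :
      sin (2 * π * n * j / p) = sin (2 * π * ((j : ZMod p) * n).valMinAbs / p) := by
    convert ZMod.sin_two_pi_mul_div_eq_valMinAbs (p := p) (j * n) using 3 <;> push_cast <;> ring
  rw [prod_congr rfl fun n _ => hnum n]
  by_cases hj : (j : ZMod p) = 0
  · have h1 : 1 ∈ Ico 1 (p / 2).succ := by
      have := (Fact.out : p.Prime).two_le
      simp only [mem_Ico, Nat.lt_succ_iff]; omega
    rw [(legendreSym.eq_zero_iff p j).mpr hj, Int.cast_zero, zero_mul]
    refine prod_eq_zero h1 ?_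
    rw [hj, zero_mul, ZMod.valMinAbs_zero, Int.cast_zero, mul_zero, zero_div, sin_zero]
  · simp_rw [ZMod.sin_two_pi_mul_valMinAbs_div]
    rw [prod_mul_distrib, ZMod.prod_sin_two_pi_mul_natAbs_valMinAbs_div hj, prod_ite,
      prod_const, prod_const, one_pow, mul_one, ZMod.gauss_lemma hp2 hj]
    norm_cast

/-- Eisenstein's formula for the Legendre symbol: for every odd prime `p` and every
integer `j`, `(j/p) = ∏_{n=1}^{(p-1)/2} sin(2πnj/p) / sin(2πn/p)`. -/
theorem statement5 (p : ℕ) (hp : Fact p.Prime) (hp2 : p ≠ 2) (j : ℤ) :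
    (legendreSym p j : ℝ) =
      ∏ n ∈ Finset.Icc 1 ((p - 1) / 2),
        Real.sin (2 * Real.pi * n * j / p) / Real.sin (2 * Real.pi * n / p) := by
  have hodd : p % 2 = 1 := hp.out.eq_two_or_odd.resolve_left hp2
  have hIcc : Icc 1 ((p - 1) / 2) = Ico 1 (p / 2).succ := by
    ext n; simp only [mem_Icc, mem_Ico]; omega
  have hden : ∏ n ∈ Ico 1 (p / 2).succ, sin (2 * π * n / p) ≠ 0 := by
    refine (prod_pos fun n hn => sin_two_pi_mul_div_pos ?_ ?_).ne' <;>
      simp only [mem_Ico] at hn <;> omega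
  rw [hIcc, prod_div_distrib, prod_sin_two_pi_mul_div_eq_legendreSym_mul hp2,
    mul_div_cancel_right₀ _ hden]
end

section
/- For every non-negative integer L, \(\sum_{j=-\infty}^{\infty} \left(\frac{j}{3}\right) q^{\binom{j-1}{2}} \binom{2L}{L+j}_q = \frac{(-1;q^3)_{L-1}}{(-1;q)_{L-1}}\, q^{L-1}\, \frac{1-q^3}{1-q}\,(1-q^L)\) when L > 0, and the sum equals 0 when L = 0. The sum is finite since the q-binomial coefficient vanishes for |j| > L. -/
open Finset

/-!
Adjoin to `ℚ(q)` a root `ω` of `X² + X + 1`. Since `(j/3) (ω - ω²) = ω^j - ω^{2j}`, the sum times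
`ω - ω²` is the difference of the sums `∑_j q^{(j-1)(j-2)/2} [2L, L+j] u^j` at `u = ω` and `u = ω²`.
Each of them is a finite Jacobi triple product (a consequence of the q-binomial theorem
`∏_{i<n} (1 + q^i z) = ∑_m q^{C(m,2)} [n, m] z^m`), and because `u³ = 1` it collapses to
`-∏_{i<L-1} (1 + q^i u)(1 + q^i u²) · ∏_{k=L-1}^{L+1} (1 + q^k u²)`.
The first product is `∏_{i<L-1} (1 - q^i + q^{2i}) = (-1;q³)_{L-1} / (-1;q)_{L-1}`, and the two
three-term products differ by `(ω - ω²) q^{L-1} (1 + q + q²) (1 - q^L)`.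
-/

section NonVanishing

open Polynomial

lemma algebraMap_ne_zero_of_eval_ne_zero {p : ℚ[X]} (x : ℚ) (h : p.eval x ≠ 0) :
    algebraMap ℚ[X] (RatFunc ℚ) p ≠ 0 :=
  (map_ne_zero_iff _ (RatFunc.algebraMap_injective ℚ)).2 fun hp => h (by simp [hp])

lemma one_add_Xq_pow_ne_zero (k : ℕ) : (1 : RatFunc ℚ) + Xq ^ k ≠ 0 := by
  rw [show (1 : RatFunc ℚ) + Xq ^ k = algebraMap ℚ[X] _ (1 + X ^ k) by simp [Xq]]
  exact algebraMap_ne_zero_of_eval_ne_zero 1 (by norm_num)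

lemma one_sub_Xq_pow_ne_zero {k : ℕ} (hk : k ≠ 0) : (1 : RatFunc ℚ) - Xq ^ k ≠ 0 := by
  have h2k : (1 : ℚ) - 2 ^ k ≠ 0 := sub_ne_zero.2 (one_lt_pow₀ one_lt_two hk).ne
  rw [show (1 : RatFunc ℚ) - Xq ^ k = algebraMap ℚ[X] _ (1 - X ^ k) by simp [Xq]]
  exact algebraMap_ne_zero_of_eval_ne_zero 2 (by simpa using h2k)

end NonVanishing

lemma one_sub_Xq_pow_three_div : (1 - Xq ^ 3) / (1 - Xq) = 1 + Xq + Xq ^ 2 := by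
  rw [div_eq_iff (by simpa using one_sub_Xq_pow_ne_zero one_ne_zero)]
  ring

lemma qPoch_Xq_succ (n : ℕ) : qPoch Xq Xq (n + 1) = qPoch Xq Xq n * (1 - Xq ^ (n + 1)) := by
  rw [qPoch_succ, pow_succ']

lemma qPoch_Xq_ne_zero (n : ℕ) : qPoch Xq Xq n ≠ 0 :=
  prod_ne_zero_iff.2 fun k _ => by simpa [pow_succ'] using one_sub_Xq_pow_ne_zero k.succ_ne_zero

lemma qPoch_neg_one_Xq_ne_zero (n : ℕ) : qPoch (-1) Xq n ≠ 0 :=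
  prod_ne_zero_iff.2 fun k _ => by simpa using one_add_Xq_pow_ne_zero k

lemma qPoch_neg_one_Xq_pow_three_div (n : ℕ) :
    qPoch (-1) (Xq ^ 3) n / qPoch (-1) Xq n = ∏ i ∈ range n, (1 - Xq ^ i + Xq ^ (2 * i)) := by
  rw [div_eq_iff (qPoch_neg_one_Xq_ne_zero n), qPoch, qPoch, ← prod_mul_distrib]
  exact prod_congr rfl fun i _ => by ring

lemma qBinom_natCast_of_le (q : RatFunc ℚ) {n m : ℕ} (h : m ≤ n) :
    qBinom q n m = qPoch q q n / (qPoch q q m * qPoch q q (n - m)) := by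
  rw [qBinom, if_pos ⟨by positivity, by exact_mod_cast h⟩, ← Nat.cast_sub h, Int.toNat_natCast,
    Int.toNat_natCast, Int.toNat_natCast]

lemma qBinom_eq_zero (q : RatFunc ℚ) {n m : ℤ} (h : m < 0 ∨ n < m) : qBinom q n m = 0 :=
  if_neg (by omega)

lemma qBinom_natCast_zero_right (n : ℕ) : qBinom Xq n (0 : ℕ) = 1 := by
  rw [qBinom_natCast_of_le _ n.zero_le, qPoch_zero, one_mul, Nat.sub_zero,
    div_self (qPoch_Xq_ne_zero n)]

lemma qBinom_natCast_self (n : ℕ) : qBinom Xq n n = 1 := by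
  rw [qBinom_natCast_of_le _ le_rfl, Nat.sub_self, qPoch_zero, mul_one,
    div_self (qPoch_Xq_ne_zero n)]

lemma qBinom_succ_s6 (n m : ℕ) :
    qBinom Xq (n + 1 : ℕ) m = qBinom Xq n m + Xq ^ (n + 1 - m) * qBinom Xq n ((m : ℤ) - 1) := by
  rcases m with _ | s
  · rw [qBinom_natCast_zero_right, qBinom_natCast_zero_right, Nat.cast_zero, zero_sub,
      qBinom_eq_zero _ (by omega), mul_zero, add_zero]
  rw [show ((s + 1 : ℕ) : ℤ) - 1 = s by omega]
  rcases lt_trichotomy s n with hs | rfl | hs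
  · obtain ⟨r, rfl⟩ := Nat.exists_eq_add_of_lt hs
    rw [qBinom_natCast_of_le _ (by omega), qBinom_natCast_of_le _ (by omega),
      qBinom_natCast_of_le _ (by omega), show s + r + 1 + 1 - (s + 1) = r + 1 by omega,
      show s + r + 1 - (s + 1) = r by omega, show s + r + 1 - s = r + 1 by omega,
      qPoch_Xq_succ (s + r + 1), qPoch_Xq_succ s, qPoch_Xq_succ r]
    field_simp [qPoch_Xq_ne_zero, one_sub_Xq_pow_ne_zero]
    ring
  · rw [qBinom_natCast_self, qBinom_natCast_self, qBinom_eq_zero _ (by omega),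
      Nat.sub_self, pow_zero, zero_add, one_mul]
  · rw [qBinom_eq_zero _ (by omega), qBinom_eq_zero _ (by omega), qBinom_eq_zero _ (by omega),
      mul_zero, add_zero]

lemma sub_mul_sub_sub_one_ediv_two (a m : ℕ) :
    ((m : ℤ) - a) * ((m : ℤ) - a - 1) / 2 = m.choose 2 - a * m + (a + 1).choose 2 := by
  rw [← Int.cast_inj (α := ℚ), Int.cast_div (Int.even_mul_pred_self _).two_dvd (by norm_num)]
  push_cast [Nat.cast_choose_two]
  ring

lemma sum_range_add_one_eq_choose_two (a : ℕ) : ∑ i ∈ range a, (i + 1) = (a + 1).choose 2 := by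
  rw [Nat.choose_two_right, ← sum_range_id, sum_range_succ']
  rfl

lemma sum_Icc_neg_eq_sum_range {M : Type*} [AddCommMonoid M] (a b : ℕ) (f : ℤ → M) :
    ∑ j ∈ Icc (-(a : ℤ)) b, f j = ∑ m ∈ range (a + b + 1), f (m - a) := by
  refine sum_nbij' (fun j => (j + a).toNat) (fun m => (m : ℤ) - a) ?_ ?_ ?_ ?_ ?_ <;>
    intro x hx <;> simp only [mem_Icc, mem_range] at hx ⊢
  all_goals first | omega | exact congrArg f (by omega)

section CubeRootOfUnity

section CommRing

variable {R : Type*} [CommRing R] {u : R}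

lemma one_add_mul_mul_one_add_mul_sq (hu : u ^ 2 + u + 1 = 0) (x : R) :
    (1 + x * u) * (1 + x * u ^ 2) = 1 - x + x ^ 2 := by
  linear_combination (x + x ^ 2 * (u - 1)) * hu

lemma prod_one_add_mul_sq_sub_prod_one_add_mul_sq_sq (hu : u ^ 2 + u + 1 = 0) (a b c : R) :
    (1 + a * u ^ 2) * (1 + b * u ^ 2) * (1 + c * u ^ 2) -
        (1 + a * (u ^ 2) ^ 2) * (1 + b * (u ^ 2) ^ 2) * (1 + c * (u ^ 2) ^ 2) =
      (u - u ^ 2) * (a * b + b * c + c * a - a - b - c) := by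
  linear_combination (u - 1) * (-u * (a + b + c) +
    (u - u ^ 2 * (u ^ 3 + 1)) * (a * b + b * c + c * a) - u ^ 6 * (u ^ 3 + 1) * (a * b * c)) * hu

end CommRing

variable {K : Type*} [Field K] {u : K}

lemma ne_zero_of_sq_add_self_add_one_eq_zero (hu : u ^ 2 + u + 1 = 0) : u ≠ 0 := by
  rintro rfl
  simp at hu

lemma inv_eq_sq_of_sq_add_self_add_one_eq_zero (hu : u ^ 2 + u + 1 = 0) : u⁻¹ = u ^ 2 :=
  inv_eq_of_mul_eq_one_right (by linear_combination (u - 1) * hu)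

lemma leg3_mul_sub_sq (hu : u ^ 2 + u + 1 = 0) (j : ℤ) :
    (leg3 j : K) * (u - u ^ 2) = u ^ j - (u ^ 2) ^ j := by
  have hu3 : u ^ 3 = 1 := by linear_combination (u - 1) * hu
  have hperiod : ∀ v : K, v ^ 3 = 1 → v ^ j = v ^ (j % 3) := by
    intro v hv
    have hv0 : v ≠ 0 := by rintro rfl; simp at hv
    conv_lhs => rw [← Int.mul_ediv_add_emod j 3]
    rw [zpow_add₀ hv0, zpow_mul, show v ^ (3 : ℤ) = 1 by exact_mod_cast hv, one_zpow, one_mul]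
  rw [hperiod u hu3, hperiod (u ^ 2) (by rw [← pow_mul, pow_mul', hu3, one_pow])]
  rcases (by omega : j % 3 = 0 ∨ j % 3 = 1 ∨ j % 3 = 2) with h | h | h <;> simp only [leg3, h]
  · simp
  · simp
  · norm_num
    linear_combination -u * (u - 1) * hu

lemma mul_sum_leg3_mul (hu : u ^ 2 + u + 1 = 0) (s : Finset ℤ) (f : ℤ → K) :
    (u - u ^ 2) * ∑ j ∈ s, (leg3 j : K) * f j =
      ∑ j ∈ s, f j * u ^ j - ∑ j ∈ s, f j * (u ^ 2) ^ j := by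
  rw [mul_sum, ← sum_sub_distrib]
  exact sum_congr rfl fun j _ => by linear_combination f j * leg3_mul_sub_sq hu j

end CubeRootOfUnity

lemma exists_sq_add_self_add_one_eq_zero (K : Type*) [Field K] [IsAlgClosed K] :
    ∃ u : K, u ^ 2 + u + 1 = 0 := by
  obtain ⟨u, hu⟩ := IsAlgClosed.exists_root (Polynomial.X ^ 2 + Polynomial.X + 1 : Polynomial K)
    (by rw [show (Polynomial.X ^ 2 + Polynomial.X + 1 : Polynomial K).degree = 2 by
      compute_degree!]; decide)
  exact ⟨u, by simpa using hu⟩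

section QSeries

variable {K : Type*}

local notation "𝔮" => algebraMap (RatFunc ℚ) K Xq

theorem prod_one_add_Xq_pow_mul_eq_sum [CommRing K] [Algebra (RatFunc ℚ) K] (n : ℕ) (z : K) :
    ∏ i ∈ range n, (1 + 𝔮 ^ i * z) =
      ∑ m ∈ range (n + 1), 𝔮 ^ m.choose 2 * algebraMap _ K (qBinom Xq n m) * z ^ m := by
  induction n with
  | zero => rw [sum_range_one, qBinom_natCast_zero_right]; simp
  | succ n ih =>
    have htop : qBinom Xq n (n + 1 : ℕ) = 0 := qBinom_eq_zero _ (by omega)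
    have hbot : qBinom Xq n ((0 : ℕ) - 1 : ℤ) = 0 := qBinom_eq_zero _ (by omega)
    have hshift : ∀ i ∈ range (n + 1),
        𝔮 ^ (i + 1).choose 2 * algebraMap _ K (Xq ^ (n + 1 - (i + 1)) *
          qBinom Xq n (((i + 1 : ℕ) : ℤ) - 1)) * z ^ (i + 1) =
        𝔮 ^ i.choose 2 * algebraMap _ K (qBinom Xq n i) * z ^ i * (𝔮 ^ n * z) := by
      intro i hi
      have hexp : (i + 1).choose 2 + (n + 1 - (i + 1)) = i.choose 2 + n := by
        have hchoose : (i + 1).choose 2 = i.choose 2 + i := by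
          simp [Nat.choose_succ_succ', add_comm]
        have := mem_range.1 hi
        omega
      rw [show ((i + 1 : ℕ) : ℤ) - 1 = i by omega, map_mul, map_pow]
      linear_combination algebraMap _ K (qBinom Xq n i) * z ^ (i + 1) *
        congrArg (𝔮 ^ ·) hexp
    simp_rw [qBinom_succ_s6, map_add, mul_add, add_mul, sum_add_distrib]
    rw [prod_range_succ, ih, mul_add, mul_one, sum_range_succ _ (n + 1), htop,
      sum_range_succ' _ (n + 1), sum_congr rfl hshift, hbot, sum_mul]
    simp

variable [Field K] [Algebra (RatFunc ℚ) K]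

lemma algebraMap_Xq_ne_zero : 𝔮 ≠ 0 :=
  (map_ne_zero _).2 RatFunc.X_ne_zero

lemma prod_one_add_Xq_pow_mul_Xq_zpow_neg_mul (a b : ℕ) {z : K} (hz : z ≠ 0) :
    ∏ i ∈ range (a + b), (1 + 𝔮 ^ i * (𝔮 ^ (-(a : ℤ)) * z)) =
      𝔮 ^ (-((a + 1).choose 2 : ℤ)) * z ^ a *
        ((∏ i ∈ range b, (1 + 𝔮 ^ i * z)) * ∏ i ∈ range a, (1 + 𝔮 ^ (i + 1) * z⁻¹)) := by
  have hq := algebraMap_Xq_ne_zero (K := K)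
  have hlow : ∀ i ∈ range a, 1 + 𝔮 ^ (a - 1 - i) * (𝔮 ^ (-(a : ℤ)) * z) =
      (𝔮 ^ (i + 1))⁻¹ * z * (1 + 𝔮 ^ (i + 1) * z⁻¹) := by
    intro i hi
    have hexp : ((a - 1 - i : ℕ) : ℤ) + -a = -((i + 1 : ℕ) : ℤ) := by
      have := mem_range.1 hi
      omega
    rw [← mul_assoc, ← zpow_natCast, ← zpow_add₀ hq, hexp, zpow_neg, zpow_natCast]
    field_simp
    ring
  have hhigh : ∀ i ∈ range b, 1 + 𝔮 ^ (a + i) * (𝔮 ^ (-(a : ℤ)) * z) = 1 + 𝔮 ^ i * z := by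
    intro i _
    rw [pow_add, zpow_neg, zpow_natCast]
    field_simp
  rw [prod_range_add, prod_congr rfl hhigh, ← prod_range_reflect, prod_congr rfl hlow,
    prod_mul_distrib, prod_mul_distrib, prod_inv_distrib, prod_pow_eq_pow_sum,
    sum_range_add_one_eq_choose_two, prod_const, card_range, zpow_neg, zpow_natCast]
  ring

/-- Finite form of the Jacobi triple product. -/
theorem sum_Icc_Xq_zpow_mul_qBinom_mul_zpow (a b : ℕ) {z : K} (hz : z ≠ 0) :
    ∑ j ∈ Icc (-(a : ℤ)) b, 𝔮 ^ (j * (j - 1) / 2) * algebraMap _ K (qBinom Xq (a + b) (a + j)) *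
        z ^ j =
      (∏ i ∈ range b, (1 + 𝔮 ^ i * z)) * ∏ i ∈ range a, (1 + 𝔮 ^ (i + 1) * z⁻¹) := by
  have hq := algebraMap_Xq_ne_zero (K := K)
  have hterm : ∀ m ∈ range (a + b + 1),
      𝔮 ^ m.choose 2 * algebraMap _ K (qBinom Xq (a + b : ℕ) m) * (𝔮 ^ (-(a : ℤ)) * z) ^ m =
        𝔮 ^ (-((a + 1).choose 2 : ℤ)) * z ^ a *
          (𝔮 ^ (((m : ℤ) - a) * ((m : ℤ) - a - 1) / 2) *
            algebraMap _ K (qBinom Xq (a + b) (a + ((m : ℤ) - a))) * z ^ ((m : ℤ) - a)) := by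
    intro m _
    rw [sub_mul_sub_sub_one_ediv_two, add_sub_cancel, Nat.cast_add]
    simp only [zpow_add₀ hq, zpow_sub₀ hq, zpow_sub₀ hz, zpow_neg, zpow_natCast, mul_pow, zpow_mul]
    field_simp
    rw [mul_assoc, ← mul_pow, one_div_mul_cancel (pow_ne_zero _ hq), one_pow, mul_one]
  have hgauss := prod_one_add_Xq_pow_mul_eq_sum (a + b) (𝔮 ^ (-(a : ℤ)) * z)
  rw [prod_one_add_Xq_pow_mul_Xq_zpow_neg_mul a b hz, sum_congr rfl hterm, ← mul_sum] at hgauss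
  rw [sum_Icc_neg_eq_sum_range]
  exact (mul_left_cancel₀ (by positivity) hgauss).symm

theorem sum_Icc_Xq_zpow_mul_qBinom_mul_cubeRoot_zpow (n : ℕ) {u : K} (hu : u ^ 2 + u + 1 = 0) :
    ∑ j ∈ Icc (-((n : ℤ) + 1)) ((n : ℤ) + 1), 𝔮 ^ ((j - 1) * (j - 2) / 2) *
        algebraMap _ K (qBinom Xq (2 * ((n : ℤ) + 1)) ((n : ℤ) + 1 + j)) * u ^ j =
      -((∏ i ∈ range n, (1 - 𝔮 ^ i + 𝔮 ^ (2 * i))) *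
        ((1 + 𝔮 ^ n * u ^ 2) * (1 + 𝔮 ^ (n + 1) * u ^ 2) * (1 + 𝔮 ^ (n + 2) * u ^ 2))) := by
  have hu0 := ne_zero_of_sq_add_self_add_one_eq_zero hu
  have hshift : Icc (-((n : ℤ) + 1)) ((n : ℤ) + 1) =
      (Icc (-((n + 2 : ℕ) : ℤ)) n).map (addRightEmbedding 1) := by
    rw [map_add_right_Icc]
    push_cast
    ring_nf
  have hterm : ∀ j ∈ Icc (-((n + 2 : ℕ) : ℤ)) n,
      𝔮 ^ ((j + 1 - 1) * (j + 1 - 2) / 2) *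
        algebraMap _ K (qBinom Xq (2 * ((n : ℤ) + 1)) ((n : ℤ) + 1 + (j + 1))) * u ^ (j + 1) =
      u * (𝔮 ^ (j * (j - 1) / 2) *
        algebraMap _ K (qBinom Xq ((n + 2 : ℕ) + n) ((n + 2 : ℕ) + j)) * u ^ j) := by
    intro j _
    rw [zpow_add_one₀ hu0, show (j + 1 - 1) * (j + 1 - 2) = j * (j - 1) by ring,
      show 2 * ((n : ℤ) + 1) = (n + 2 : ℕ) + n by push_cast; ring,
      show (n : ℤ) + 1 + (j + 1) = (n + 2 : ℕ) + j by push_cast; ring]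
    ring
  rw [hshift, sum_map]
  simp only [addRightEmbedding_apply]
  rw [sum_congr rfl hterm, ← mul_sum, sum_Icc_Xq_zpow_mul_qBinom_mul_zpow _ _ hu0,
    inv_eq_sq_of_sq_add_self_add_one_eq_zero hu]
  set A := ∏ i ∈ range n, (1 + 𝔮 ^ i * u)
  set B := ∏ i ∈ range (n + 2), (1 + 𝔮 ^ (i + 1) * u ^ 2)
  set P := (1 + 𝔮 ^ n * u ^ 2) * (1 + 𝔮 ^ (n + 1) * u ^ 2) * (1 + 𝔮 ^ (n + 2) * u ^ 2)
  have hfirst : ∏ i ∈ range (n + 3), (1 + 𝔮 ^ i * u ^ 2) = (1 + u ^ 2) * B := by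
    rw [prod_range_succ', pow_zero, one_mul, mul_comm]
  have hlast : ∏ i ∈ range (n + 3), (1 + 𝔮 ^ i * u ^ 2) =
      (∏ i ∈ range n, (1 + 𝔮 ^ i * u ^ 2)) * P := by
    simp only [prod_range_succ, P, mul_assoc]
  have hpair : A * ∏ i ∈ range n, (1 + 𝔮 ^ i * u ^ 2) =
      ∏ i ∈ range n, (1 - 𝔮 ^ i + 𝔮 ^ (2 * i)) := by
    rw [← prod_mul_distrib]
    exact prod_congr rfl fun i _ => by rw [one_add_mul_mul_one_add_mul_sq hu, pow_mul']
  linear_combination A * B * hu + A * hfirst - A * hlast - P * hpair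

end QSeries

/-- Theorem 2.1: for `L ≥ 0`,
`∑_j (j/3) q^{binom(j-1,2)} [2L choose L+j]_q` equals
`((-1;q³)_{L-1}/(-1;q)_{L-1}) q^{L-1} (1-q³)/(1-q) (1-q^L)` for `L > 0`, and `0` for `L = 0`.
The sum is taken over `-L ≤ j ≤ L`, which covers all nonzero terms. -/
theorem statement6 (L : ℕ) :
    ∑ j ∈ Finset.Icc (-(L : ℤ)) (L : ℤ),
      (leg3 j : RatFunc ℚ) * Xq ^ ((j - 1) * (j - 2) / 2) * qBinom Xq (2 * L) ((L : ℤ) + j) =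
    if L = 0 then 0 else
      qPoch (-1) (Xq ^ 3) (L - 1) / qPoch (-1) Xq (L - 1) * Xq ^ (L - 1) *
        ((1 - Xq ^ 3) / (1 - Xq)) * (1 - Xq ^ L) := by
  rcases L with _ | n
  · simp [leg3]
  obtain ⟨ω, hω⟩ := exists_sq_add_self_add_one_eq_zero (AlgebraicClosure (RatFunc ℚ))
  have hω2 : (ω ^ 2) ^ 2 + ω ^ 2 + 1 = 0 := by linear_combination (ω ^ 2 - ω + 1) * hω
  -- `(ω - ω²)² = -3`
  have hsub : ω - ω ^ 2 ≠ 0 := fun h => three_ne_zero (α := AlgebraicClosure (RatFunc ℚ))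
    (by linear_combination (ω ^ 2 - 3 * ω + 3) * hω - (ω - ω ^ 2) * h)
  rw [if_neg n.succ_ne_zero, Nat.add_sub_cancel, qPoch_neg_one_Xq_pow_three_div,
    one_sub_Xq_pow_three_div, Nat.cast_succ]
  apply (algebraMap (RatFunc ℚ) (AlgebraicClosure (RatFunc ℚ))).injective
  apply mul_left_cancel₀ hsub
  simp only [map_sum, map_mul, map_intCast, map_zpow₀, mul_assoc]
  rw [mul_sum_leg3_mul hω, sum_Icc_Xq_zpow_mul_qBinom_mul_cubeRoot_zpow n hω,
    sum_Icc_Xq_zpow_mul_qBinom_mul_cubeRoot_zpow n hω2]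
  simp only [map_prod, map_sub, map_add, map_one, map_pow]
  set q := algebraMap (RatFunc ℚ) (AlgebraicClosure (RatFunc ℚ)) Xq
  linear_combination -(∏ i ∈ range n, (1 - q ^ i + q ^ (2 * i))) *
    prod_one_add_mul_sq_sub_prod_one_add_mul_sq_sq hω (q ^ n) (q ^ (n + 1)) (q ^ (n + 2))
end

section
/- For every non-negative integer L, \(\sum_{j=-\infty}^{\infty} q^{\binom{j-1}{2}} \left(\frac{j}{3}\right) \binom{2L+1}{L+j}_q = q^L\, \frac{(-1;q^3)_L}{(-1;q)_L}\,(1+q-q^{L+1})\). The sum is finite since the q-binomial coefficient vanishes for |j| > L+1. -/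
open Finset

lemma Xq_ne_zero : Xq ≠ 0 := RatFunc.X_ne_zero

lemma Xq_pow_ne_one {k : ℕ} (hk : k ≠ 0) : Xq ^ k ≠ 1 := by
  intro h
  have h2 : (Polynomial.X : Polynomial ℚ) ^ k = 1 := by
    apply RatFunc.algebraMap_injective ℚ
    rw [map_pow, map_one, RatFunc.algebraMap_X]
    exact h
  have := congrArg Polynomial.natDegree h2
  simp [Polynomial.natDegree_X_pow] at this
  exact hk this

lemma Xq_pow_ne_neg_one (k : ℕ) : Xq ^ k ≠ -1 := by
  intro h
  have h2 : (Polynomial.X : Polynomial ℚ) ^ k = -1 := by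
    apply RatFunc.algebraMap_injective ℚ
    rw [map_pow, map_neg, map_one, RatFunc.algebraMap_X]
    exact h
  rcases Nat.eq_zero_or_pos k with hk | hk
  · subst hk; norm_num at h2
  · have := congrArg Polynomial.natDegree h2
    simp [Polynomial.natDegree_X_pow] at this
    omega

noncomputable def qP (n : ℕ) : RatFunc ℚ := qPoch Xq Xq n

lemma qP_zero : qP 0 = 1 := by simp [qP, qPoch]

lemma qP_succ (n : ℕ) : qP (n+1) = qP n * (1 - Xq ^ (n+1)) := by
  rw [qP, qP, qPoch, qPoch, Finset.prod_range_succ]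
  ring

lemma qP_ne_zero (n : ℕ) : qP n ≠ 0 := by
  rw [qP, qPoch]
  apply Finset.prod_ne_zero_iff.2
  intro k _
  intro h
  have : Xq ^ (k+1) = 1 := by
    have : Xq * Xq ^ k = 1 := by linear_combination -h
    rw [pow_succ]; linear_combination this
  exact Xq_pow_ne_one (Nat.succ_ne_zero k) this

lemma qBinom_eq_zero_s7 {top k : ℤ} (h : ¬ (0 ≤ k ∧ k ≤ top)) : qBinom Xq top k = 0 :=
  if_neg h

lemma qBinom_nat (a b : ℕ) :
    qBinom Xq ((a+b : ℕ) : ℤ) ((a : ℕ) : ℤ) = qP (a+b) / (qP a * qP b) := by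
  rw [qBinom, if_pos (by constructor <;> [positivity; exact_mod_cast Nat.le_add_right a b])]
  have h1 : ((a+b:ℕ):ℤ).toNat = a + b := by omega
  have h2 : ((a:ℕ):ℤ).toNat = a := by omega
  have h3 : (((a+b:ℕ):ℤ) - ((a:ℕ):ℤ)).toNat = b := by omega
  rw [h1, h2, h3]; rfl

lemma qBinom_zero' (n : ℕ) : qBinom Xq ((n : ℕ) : ℤ) 0 = 1 := by
  have := qBinom_nat 0 n
  simp only [Nat.zero_add, Nat.cast_zero] at this
  rw [this, qP_zero, one_mul, div_self (qP_ne_zero n)]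

lemma qBinom_top' (n : ℕ) : qBinom Xq ((n : ℕ) : ℤ) ((n : ℕ) : ℤ) = 1 := by
  have := qBinom_nat n 0
  simp only [Nat.add_zero] at this
  rw [this, qP_zero, mul_one, div_self (qP_ne_zero n)]

lemma pascal_core (a b : ℕ) :
    qP (a+b+2) / (qP (a+1) * qP (b+1)) =
    qP (a+b+1) / (qP a * qP (b+1)) + Xq ^ (a+1) * (qP (a+b+1) / (qP (a+1) * qP b)) := by
  have e1 : qP (a+b+2) = qP (a+b+1) * (1 - Xq ^ (a+b+2)) := qP_succ (a+b+1)
  have e2 : qP (a+1) = qP a * (1 - Xq ^ (a+1)) := qP_succ a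
  have e3 : qP (b+1) = qP b * (1 - Xq ^ (b+1)) := qP_succ b
  have na := qP_ne_zero a
  have nb := qP_ne_zero b
  have na1 := qP_ne_zero (a+1)
  have nb1 := qP_ne_zero (b+1)
  have fa : (1 : RatFunc ℚ) - Xq ^ (a+1) ≠ 0 :=
    sub_ne_zero_of_ne (Ne.symm (Xq_pow_ne_one (Nat.succ_ne_zero a)))
  have fb : (1 : RatFunc ℚ) - Xq ^ (b+1) ≠ 0 :=
    sub_ne_zero_of_ne (Ne.symm (Xq_pow_ne_one (Nat.succ_ne_zero b)))
  rw [e1, e2, e3]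
  field_simp
  ring

lemma qBinom_pascal1 (n : ℕ) (k : ℤ) :
    qBinom Xq ((n:ℤ)+1) k = qBinom Xq (n:ℤ) (k-1) + Xq ^ k * qBinom Xq (n:ℤ) k := by
  rcases lt_trichotomy k 0 with hk | hk | hk
  · rw [qBinom_eq_zero_s7 (top := (n:ℤ)+1) (by omega),
      qBinom_eq_zero_s7 (top := (n:ℤ)) (k := k-1) (by omega),
      qBinom_eq_zero_s7 (top := (n:ℤ)) (k := k) (by omega)]
    ring
  · subst hk
    rw [show ((n:ℤ)+1) = ((n+1:ℕ):ℤ) from by push_cast; ring, qBinom_zero' (n+1),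
      show (n:ℤ) = ((n:ℕ):ℤ) from rfl, qBinom_zero' n,
      qBinom_eq_zero_s7 (top := ((n:ℕ):ℤ)) (k := (0:ℤ)-1) (by omega)]
    norm_num
  · rcases lt_trichotomy ((n:ℤ)+1) k with h2 | h2 | h2
    · rw [qBinom_eq_zero_s7 (top := (n:ℤ)+1) (by omega),
        qBinom_eq_zero_s7 (top := (n:ℤ)) (k := k-1) (by omega),
        qBinom_eq_zero_s7 (top := (n:ℤ)) (k := k) (by omega)]
      ring
    · rw [show ((n:ℤ)+1) = ((n+1:ℕ):ℤ) from by push_cast; ring,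
        show k = ((n+1:ℕ):ℤ) from by omega, qBinom_top' (n+1),
        show ((n+1:ℕ):ℤ)-1 = ((n:ℕ):ℤ) from by push_cast; ring, qBinom_top' n,
        qBinom_eq_zero_s7 (top := ((n:ℕ):ℤ)) (k := ((n+1:ℕ):ℤ)) (by push_cast; omega)]
      ring
    · obtain ⟨a, ha⟩ : ∃ a : ℕ, (a:ℤ) = k - 1 := ⟨(k-1).toNat, by omega⟩
      obtain ⟨b, hb⟩ : ∃ b : ℕ, (b:ℤ) = (n:ℤ) - k := ⟨((n:ℤ)-k).toNat, by omega⟩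
      have hn : n = a + 1 + b := by omega
      subst hn
      have e1 : qBinom Xq (((a+1+b:ℕ):ℤ)+1) k = qP (a+b+2) / (qP (a+1) * qP (b+1)) := by
        rw [show ((a+1+b:ℕ):ℤ)+1 = (((a+1)+(b+1) : ℕ) : ℤ) from by push_cast; ring,
          show k = ((a+1:ℕ):ℤ) from by push_cast; omega, qBinom_nat (a+1) (b+1),
          show (a+1)+(b+1) = a+b+2 from by omega]
      have e2 : qBinom Xq ((a+1+b:ℕ):ℤ) (k-1) = qP (a+b+1) / (qP a * qP (b+1)) := by
        rw [show ((a+1+b:ℕ):ℤ) = ((a+(b+1):ℕ):ℤ) from by push_cast; ring,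
          show k-1 = ((a:ℕ):ℤ) from by push_cast; omega, qBinom_nat a (b+1),
          show a+(b+1) = a+b+1 from by omega]
      have e3 : qBinom Xq ((a+1+b:ℕ):ℤ) k = qP (a+b+1) / (qP (a+1) * qP b) := by
        rw [show ((a+1+b:ℕ):ℤ) = (((a+1)+b:ℕ):ℤ) from by push_cast; ring,
          show k = ((a+1:ℕ):ℤ) from by push_cast; omega, qBinom_nat (a+1) b,
          show (a+1)+b = a+b+1 from by omega]
      have e4 : Xq ^ k = Xq ^ (a+1 : ℕ) := by
        rw [show k = ((a+1:ℕ):ℤ) from by push_cast; omega, zpow_natCast]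
      rw [e1, e2, e3, e4]
      exact pascal_core a b

lemma qBinom_pascal2 (n : ℕ) (k : ℤ) :
    qBinom Xq ((n:ℤ)+1) k = qBinom Xq (n:ℤ) k + Xq ^ ((n:ℤ)+1-k) * qBinom Xq (n:ℤ) (k-1) := by
  rcases lt_trichotomy k 0 with hk | hk | hk
  · rw [qBinom_eq_zero_s7 (top := (n:ℤ)+1) (by omega),
      qBinom_eq_zero_s7 (top := (n:ℤ)) (k := k-1) (by omega),
      qBinom_eq_zero_s7 (top := (n:ℤ)) (k := k) (by omega)]
    ring
  · subst hk
    rw [show ((n:ℤ)+1) = ((n+1:ℕ):ℤ) from by push_cast; ring, qBinom_zero' (n+1),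
      show (n:ℤ) = ((n:ℕ):ℤ) from rfl, qBinom_zero' n,
      qBinom_eq_zero_s7 (top := ((n:ℕ):ℤ)) (k := (0:ℤ)-1) (by omega)]
    ring
  · rcases lt_trichotomy ((n:ℤ)+1) k with h2 | h2 | h2
    · rw [qBinom_eq_zero_s7 (top := (n:ℤ)+1) (by omega),
        qBinom_eq_zero_s7 (top := (n:ℤ)) (k := k-1) (by omega),
        qBinom_eq_zero_s7 (top := (n:ℤ)) (k := k) (by omega)]
      ring
    · rw [show ((n:ℤ)+1) = ((n+1:ℕ):ℤ) from by push_cast; ring,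
        show k = ((n+1:ℕ):ℤ) from by omega, qBinom_top' (n+1),
        show ((n+1:ℕ):ℤ)-1 = ((n:ℕ):ℤ) from by push_cast; ring, qBinom_top' n,
        qBinom_eq_zero_s7 (top := ((n:ℕ):ℤ)) (k := ((n+1:ℕ):ℤ)) (by push_cast; omega),
        show ((n+1:ℕ):ℤ)-((n+1:ℕ):ℤ) = 0 from by ring]
      norm_num
    · obtain ⟨a, ha⟩ : ∃ a : ℕ, (a:ℤ) = k - 1 := ⟨(k-1).toNat, by omega⟩
      obtain ⟨b, hb⟩ : ∃ b : ℕ, (b:ℤ) = (n:ℤ) - k := ⟨((n:ℤ)-k).toNat, by omega⟩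
      have hn : n = a + 1 + b := by omega
      subst hn
      have e1 : qBinom Xq (((a+1+b:ℕ):ℤ)+1) k = qP (a+b+2) / (qP (a+1) * qP (b+1)) := by
        rw [show ((a+1+b:ℕ):ℤ)+1 = (((a+1)+(b+1) : ℕ) : ℤ) from by push_cast; ring,
          show k = ((a+1:ℕ):ℤ) from by push_cast; omega, qBinom_nat (a+1) (b+1),
          show (a+1)+(b+1) = a+b+2 from by omega]
      have e2 : qBinom Xq ((a+1+b:ℕ):ℤ) (k-1) = qP (a+b+1) / (qP a * qP (b+1)) := by
        rw [show ((a+1+b:ℕ):ℤ) = ((a+(b+1):ℕ):ℤ) from by push_cast; ring,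
          show k-1 = ((a:ℕ):ℤ) from by push_cast; omega, qBinom_nat a (b+1),
          show a+(b+1) = a+b+1 from by omega]
      have e3 : qBinom Xq ((a+1+b:ℕ):ℤ) k = qP (a+b+1) / (qP (a+1) * qP b) := by
        rw [show ((a+1+b:ℕ):ℤ) = (((a+1)+b:ℕ):ℤ) from by push_cast; ring,
          show k = ((a+1:ℕ):ℤ) from by push_cast; omega, qBinom_nat (a+1) b,
          show (a+1)+b = a+b+1 from by omega]
      have e4 : Xq ^ (((a+1+b:ℕ):ℤ)+1-k) = Xq ^ (b+1 : ℕ) := by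
        rw [show ((a+1+b:ℕ):ℤ)+1-k = ((b+1:ℕ):ℤ) from by push_cast; omega, zpow_natCast]
      rw [e1, e2, e3, e4]
      have h := pascal_core b a
      simp only [show b+a+2 = a+b+2 from by omega, show b+a+1 = a+b+1 from by omega] at h
      linear_combination h

lemma leg3_rel (j : ℤ) : leg3 (j+1) + leg3 j + leg3 (j-1) = 0 := by
  unfold leg3
  have h0 : j % 3 = 0 ∨ j % 3 = 1 ∨ j % 3 = 2 := by omega
  rcases h0 with h | h | h
  · rw [show (j+1) % 3 = 1 from by omega, show (j-1) % 3 = 2 from by omega, h]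
    norm_num
  · rw [show (j+1) % 3 = 2 from by omega, show (j-1) % 3 = 0 from by omega, h]
    norm_num
  · rw [show (j+1) % 3 = 0 from by omega, show (j-1) % 3 = 1 from by omega, h]
    norm_num

lemma epow1 (t j : ℤ) : (j+(t+1))*(j+(t+1)-1)/2 = (j+t)*(j+t-1)/2 + (j+t) := by
  obtain ⟨c, hc⟩ : Even ((j+t-1)*((j+t-1)+1)) := Int.even_mul_succ_self _
  have h1 : (j+t)*(j+t-1) = 2*c := by linear_combination hc
  have h2 : (j+(t+1))*(j+(t+1)-1) = 2*(c + (j+t)) := by linear_combination hc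
  rw [h1, h2]
  omega

lemma epow2 (t j : ℤ) : (j+t)*(j+t-1)/2 = (j+(t-1))*(j+(t-1)-1)/2 + (j+t-1) := by
  obtain ⟨c, hc⟩ : Even ((j+t-2)*((j+t-2)+1)) := Int.even_mul_succ_self _
  have h1 : (j+(t-1))*(j+(t-1)-1) = 2*c := by linear_combination hc
  have h2 : (j+t)*(j+t-1) = 2*(c + (j+t-1)) := by linear_combination hc
  rw [h1, h2]
  omega

noncomputable def Aa (t : ℤ) (n : ℕ) (m N : ℤ) : RatFunc ℚ :=
  ∑ j ∈ Finset.Icc (-N) N,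
    Xq ^ ((j+t)*(j+t-1)/2) * (leg3 j : RatFunc ℚ) * qBinom Xq ((n:ℕ):ℤ) (m+j)

lemma Aa_mono (t : ℤ) (n : ℕ) (m N N' : ℤ) (hNN : N ≤ N') (h1 : m ≤ N) (h2 : (n:ℤ) - m ≤ N) :
    Aa t n m N' = Aa t n m N := by
  unfold Aa
  refine (Finset.sum_subset (Finset.Icc_subset_Icc (by omega) hNN) ?_).symm
  intro j hj hj'
  simp only [Finset.mem_Icc] at hj hj'
  have hz : qBinom Xq ((n:ℕ):ℤ) (m+j) = 0 := qBinom_eq_zero_s7 (by omega)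
  rw [hz, mul_zero]

lemma sum_Icc_shift (f : ℤ → RatFunc ℚ) (a b c : ℤ) :
    ∑ j ∈ Finset.Icc a b, f (j+c) = ∑ j ∈ Finset.Icc (a+c) (b+c), f j := by
  rw [← Finset.map_add_right_Icc a b c, Finset.sum_map]
  rfl

lemma Aa_P1 (t : ℤ) (n : ℕ) (m N : ℤ) :
    Aa t (n+1) m N = Aa t n (m-1) N + Xq ^ (m-t) * Aa (t+1) n m N := by
  unfold Aa
  rw [Finset.mul_sum, ← Finset.sum_add_distrib]
  refine Finset.sum_congr rfl fun j _ => ?_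
  rw [show ((n+1:ℕ):ℤ) = ((n:ℕ):ℤ)+1 from by push_cast; ring, qBinom_pascal1 n (m+j),
    show m+j-1 = (m-1)+j from by ring]
  have h2 : (Xq:RatFunc ℚ) ^ (m+j) = Xq ^ (m-t) * Xq ^ (j+t) := by
    rw [← zpow_add₀ Xq_ne_zero]; congr 1; ring
  have h3 : (Xq:RatFunc ℚ) ^ ((j+(t+1))*(j+(t+1)-1)/2)
      = Xq ^ ((j+t)*(j+t-1)/2) * Xq ^ (j+t) := by
    rw [epow1, zpow_add₀ Xq_ne_zero]
  rw [h2, h3]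
  ring

lemma Aa_P2 (t : ℤ) (n : ℕ) (m N : ℤ) :
    Aa t (n+1) m N = Aa t n m N + Xq ^ ((n:ℤ)-m+t) * Aa (t-1) n (m-1) N := by
  unfold Aa
  rw [Finset.mul_sum, ← Finset.sum_add_distrib]
  refine Finset.sum_congr rfl fun j _ => ?_
  rw [show ((n+1:ℕ):ℤ) = ((n:ℕ):ℤ)+1 from by push_cast; ring, qBinom_pascal2 n (m+j),
    show m+j-1 = (m-1)+j from by ring]
  have key : (Xq:RatFunc ℚ) ^ ((j+t)*(j+t-1)/2) * Xq ^ ((n:ℤ)+1-(m+j))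
      = Xq ^ ((n:ℤ)-m+t) * Xq ^ ((j+(t-1))*(j+(t-1)-1)/2) := by
    rw [← zpow_add₀ Xq_ne_zero, ← zpow_add₀ Xq_ne_zero, epow2 t j]
    congr 1
    ring
  calc Xq ^ ((j+t)*(j+t-1)/2) * (leg3 j : RatFunc ℚ) *
        (qBinom Xq ((n:ℕ):ℤ) (m+j) + Xq ^ ((n:ℤ)+1-(m+j)) * qBinom Xq ((n:ℕ):ℤ) ((m-1)+j))
      = Xq ^ ((j+t)*(j+t-1)/2) * (leg3 j : RatFunc ℚ) * qBinom Xq ((n:ℕ):ℤ) (m+j)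
        + (Xq ^ ((j+t)*(j+t-1)/2) * Xq ^ ((n:ℤ)+1-(m+j))) * ((leg3 j : RatFunc ℚ)
          * qBinom Xq ((n:ℕ):ℤ) ((m-1)+j)) := by ring
    _ = _ := by rw [key]; ring

lemma Aa_chi (t : ℤ) (n : ℕ) (m N : ℤ) (h1 : m + 1 ≤ N) (h2 : (n:ℤ) - m + 1 ≤ N) :
    Aa (t-1) n (m-1) N + Aa t n m N + Aa (t+1) n (m+1) N = 0 := by
  set g1 : ℤ → RatFunc ℚ := fun j =>
    Xq ^ ((j+t)*(j+t-1)/2) * (leg3 (j+1) : RatFunc ℚ) * qBinom Xq ((n:ℕ):ℤ) (m+j) with hg1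
  set g2 : ℤ → RatFunc ℚ := fun j =>
    Xq ^ ((j+t)*(j+t-1)/2) * (leg3 (j-1) : RatFunc ℚ) * qBinom Xq ((n:ℕ):ℤ) (m+j) with hg2
  have hA : Aa (t-1) n (m-1) N = ∑ j ∈ Finset.Icc (-N) N, g1 j := by
    unfold Aa
    have hsh := sum_Icc_shift
      (fun j => Xq ^ ((j+(t-1))*(j+(t-1)-1)/2) * (leg3 j : RatFunc ℚ)
        * qBinom Xq ((n:ℕ):ℤ) ((m-1)+j)) (-N-1) (N-1) 1
    rw [show -N-1+1 = -N from by ring, show N-1+1 = N from by ring] at hsh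
    rw [← hsh]
    have hterm : ∑ j ∈ Finset.Icc (-N-1) (N-1),
        (Xq ^ (((j+1)+(t-1))*((j+1)+(t-1)-1)/2) * (leg3 (j+1) : RatFunc ℚ)
          * qBinom Xq ((n:ℕ):ℤ) ((m-1)+(j+1)))
        = ∑ j ∈ Finset.Icc (-N-1) (N-1), g1 j := by
      refine Finset.sum_congr rfl fun j _ => ?_
      rw [hg1, show ((j+1)+(t-1))*((j+1)+(t-1)-1) = (j+t)*(j+t-1) from by ring,
        show (m-1)+(j+1) = m+j from by ring]
    rw [hterm]
    have s1 : ∑ j ∈ Finset.Icc (-N-1) (N-1), g1 j = ∑ j ∈ Finset.Icc (-N-1) N, g1 j := by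
      refine Finset.sum_subset (Finset.Icc_subset_Icc le_rfl (by omega)) fun j hj hj' => ?_
      simp only [Finset.mem_Icc] at hj hj'
      rw [hg1]
      simp only
      rw [qBinom_eq_zero_s7 (by omega), mul_zero]
    have s2 : ∑ j ∈ Finset.Icc (-N) N, g1 j = ∑ j ∈ Finset.Icc (-N-1) N, g1 j := by
      refine Finset.sum_subset (Finset.Icc_subset_Icc (by omega) le_rfl) fun j hj hj' => ?_
      simp only [Finset.mem_Icc] at hj hj'
      rw [hg1]
      simp only
      rw [qBinom_eq_zero_s7 (by omega), mul_zero]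
    rw [s1, ← s2]
  have hB : Aa (t+1) n (m+1) N = ∑ j ∈ Finset.Icc (-N) N, g2 j := by
    unfold Aa
    have hsh := sum_Icc_shift
      (fun j => Xq ^ ((j+(t+1))*(j+(t+1)-1)/2) * (leg3 j : RatFunc ℚ)
        * qBinom Xq ((n:ℕ):ℤ) ((m+1)+j)) (-N+1) (N+1) (-1)
    rw [show -N+1+(-1) = -N from by ring, show N+1+(-1) = N from by ring] at hsh
    rw [← hsh]
    have hterm : ∑ j ∈ Finset.Icc (-N+1) (N+1),
        (Xq ^ (((j+(-1))+(t+1))*((j+(-1))+(t+1)-1)/2) * (leg3 (j+(-1)) : RatFunc ℚ)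
          * qBinom Xq ((n:ℕ):ℤ) ((m+1)+(j+(-1))))
        = ∑ j ∈ Finset.Icc (-N+1) (N+1), g2 j := by
      refine Finset.sum_congr rfl fun j _ => ?_
      rw [hg2, show ((j+(-1))+(t+1))*((j+(-1))+(t+1)-1) = (j+t)*(j+t-1) from by ring,
        show (m+1)+(j+(-1)) = m+j from by ring, show j+(-1) = j-1 from by ring]
    rw [hterm]
    have s1 : ∑ j ∈ Finset.Icc (-N+1) (N+1), g2 j = ∑ j ∈ Finset.Icc (-N) (N+1), g2 j := by
      refine Finset.sum_subset (Finset.Icc_subset_Icc (by omega) le_rfl) fun j hj hj' => ?_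
      simp only [Finset.mem_Icc] at hj hj'
      rw [hg2]
      simp only
      rw [qBinom_eq_zero_s7 (by omega), mul_zero]
    have s2 : ∑ j ∈ Finset.Icc (-N) N, g2 j = ∑ j ∈ Finset.Icc (-N) (N+1), g2 j := by
      refine Finset.sum_subset (Finset.Icc_subset_Icc le_rfl (by omega)) fun j hj hj' => ?_
      simp only [Finset.mem_Icc] at hj hj'
      rw [hg2]
      simp only
      rw [qBinom_eq_zero_s7 (by omega), mul_zero]
    rw [s1, ← s2]
  rw [hA, hB]
  unfold Aa
  rw [← Finset.sum_add_distrib, ← Finset.sum_add_distrib]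
  refine Finset.sum_eq_zero fun j _ => ?_
  have hχ : (leg3 (j+1) : RatFunc ℚ) + (leg3 j : RatFunc ℚ) + (leg3 (j-1) : RatFunc ℚ) = 0 := by
    have h := leg3_rel j
    have h2 : ((leg3 (j+1) + leg3 j + leg3 (j-1) : ℤ) : RatFunc ℚ) = ((0:ℤ) : RatFunc ℚ) := by
      rw [h]
    push_cast at h2 ⊢
    exact h2
  rw [hg1, hg2]
  simp only
  linear_combination (Xq ^ ((j+t)*(j+t-1)/2) * qBinom Xq ((n:ℕ):ℤ) (m+j)) * hχ

noncomputable def Pp (L : ℕ) : RatFunc ℚ := ∏ k ∈ Finset.range L, (1 - Xq^k + Xq^(2*k))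

lemma Pp_zero : Pp 0 = 1 := by simp [Pp]

lemma Pp_succ (L : ℕ) : Pp (L+1) = Pp L * (1 - Xq^L + Xq^(2*L)) := by
  rw [Pp, Pp, Finset.prod_range_succ]

lemma leg3_one : leg3 1 = 1 := by decide
lemma leg3_negone : leg3 (-1) = -1 := by decide
lemma leg3_zero : leg3 0 = 0 := by decide

lemma base_S : Aa (-1) 1 0 2 = 1 := by
  unfold Aa
  rw [Finset.sum_eq_single 1]
  · rw [show ((1:ℤ)+(-1))*((1:ℤ)+(-1)-1)/2 = 0 from by norm_num, zpow_zero, leg3_one,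
      show (0:ℤ)+1 = ((1:ℕ):ℤ) from by norm_num]
    rw [show ((1:ℕ):ℤ) = ((1:ℕ):ℤ) from rfl]
    have := qBinom_top' 1
    rw [this]
    norm_num
  · intro b hb hne
    simp only [Finset.mem_Icc] at hb
    obtain ⟨hb1, hb2⟩ := hb
    interval_cases b
    · rw [qBinom_eq_zero_s7 (by omega), mul_zero]
    · rw [qBinom_eq_zero_s7 (by omega), mul_zero]
    · rw [leg3_zero]; norm_num
    · omega
    · rw [qBinom_eq_zero_s7 (by norm_num), mul_zero]
  · intro h
    simp only [Finset.mem_Icc] at h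
    omega

lemma base_C : Aa 0 1 1 2 = -Xq := by
  unfold Aa
  rw [Finset.sum_eq_single (-1)]
  · rw [show ((-1:ℤ)+0)*((-1:ℤ)+0-1)/2 = 1 from by norm_num, leg3_negone,
      show (1:ℤ)+(-1) = (0:ℤ) from by norm_num]
    have := qBinom_zero' 1
    rw [this]
    push_cast
    rw [zpow_one]
    ring
  · intro b hb hne
    simp only [Finset.mem_Icc] at hb
    obtain ⟨hb1, hb2⟩ := hb
    interval_cases b
    · rw [qBinom_eq_zero_s7 (by omega), mul_zero]
    · omega
    · rw [leg3_zero]; norm_num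
    · rw [qBinom_eq_zero_s7 (by norm_num), mul_zero]
    · rw [qBinom_eq_zero_s7 (by norm_num), mul_zero]
  · intro h
    simp only [Finset.mem_Icc] at h
    omega

lemma key (L : ℕ) :
    Aa (-1) (2*L+1) (L:ℤ) ((L:ℤ)+2) = Xq^L * (1 + Xq - Xq^(L+1)) * Pp L ∧
    Aa 0 (2*L+1) ((L:ℤ)+1) ((L:ℤ)+2) = (1 - Xq^L - Xq^(L+1)) * Pp L := by
  induction L with
  | zero =>
    constructor
    · rw [show (2*0+1) = 1 from rfl, show ((0:ℕ):ℤ) = 0 from rfl]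
      rw [show (0:ℤ)+2 = 2 from by norm_num, base_S, Pp_zero]
      norm_num
    · rw [show (2*0+1) = 1 from rfl, show ((0:ℕ):ℤ)+1 = 1 from by norm_num]
      rw [show ((0:ℕ):ℤ)+2 = 2 from by norm_num, base_C, Pp_zero]
      norm_num
  | succ L ih =>
    obtain ⟨hS, hC⟩ := ih
    have hS3' : Aa (-1) (2*L+1) (L:ℤ) ((L:ℤ)+3) = Xq^L * (1 + Xq - Xq^(L+1)) * Pp L := by
      rw [Aa_mono (-1) (2*L+1) (L:ℤ) ((L:ℤ)+2) ((L:ℤ)+3) (by omega) (by omega)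
        (by push_cast; omega)]
      exact hS
    have hC3' : Aa 0 (2*L+1) ((L:ℤ)+1) ((L:ℤ)+3) = (1 - Xq^L - Xq^(L+1)) * Pp L := by
      rw [Aa_mono 0 (2*L+1) ((L:ℤ)+1) ((L:ℤ)+2) ((L:ℤ)+3) (by omega) (by omega)
        (by push_cast; omega)]
      exact hC
    -- hU
    have hU : Aa (-1) (2*L+2) ((L:ℤ)+1) ((L:ℤ)+3)
        = Aa (-1) (2*L+1) (L:ℤ) ((L:ℤ)+3)
          + Xq^(L+2) * Aa 0 (2*L+1) ((L:ℤ)+1) ((L:ℤ)+3) := by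
      have h := Aa_P1 (-1) (2*L+1) ((L:ℤ)+1) ((L:ℤ)+3)
      rw [show 2*L+1+1 = 2*L+2 from by omega, show (L:ℤ)+1-1 = (L:ℤ) from by ring,
        show (L:ℤ)+1-(-1) = (((L+2:ℕ)):ℤ) from by push_cast; ring, zpow_natCast,
        show (-1:ℤ)+1 = 0 from by norm_num] at h
      exact h
    -- hG : chi at t = -1, m = L
    have hG : Aa (-2) (2*L+1) ((L:ℤ)-1) ((L:ℤ)+3) + Aa (-1) (2*L+1) (L:ℤ) ((L:ℤ)+3)
        + Aa 0 (2*L+1) ((L:ℤ)+1) ((L:ℤ)+3) = 0 := by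
      have h := Aa_chi (-1) (2*L+1) (L:ℤ) ((L:ℤ)+3) (by omega) (by push_cast; omega)
      rw [show (-1:ℤ)-1 = -2 from by norm_num, show (-1:ℤ)+1 = 0 from by norm_num] at h
      exact h
    -- hE
    have hE : Aa (-2) (2*L+2) (L:ℤ) ((L:ℤ)+3)
        = Aa (-2) (2*L+1) ((L:ℤ)-1) ((L:ℤ)+3)
          + Xq^(L+2) * Aa (-1) (2*L+1) (L:ℤ) ((L:ℤ)+3) := by
      have h := Aa_P1 (-2) (2*L+1) (L:ℤ) ((L:ℤ)+3)
      rw [show 2*L+1+1 = 2*L+2 from by omega,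
        show (L:ℤ)-(-2) = (((L+2:ℕ)):ℤ) from by push_cast; ring, zpow_natCast,
        show (-2:ℤ)+1 = -1 from by norm_num] at h
      exact h
    -- hSnew
    have hSnew : Aa (-1) (2*L+3) ((L:ℤ)+1) ((L:ℤ)+3)
        = Aa (-1) (2*L+2) ((L:ℤ)+1) ((L:ℤ)+3)
          + Xq^L * Aa (-2) (2*L+2) (L:ℤ) ((L:ℤ)+3) := by
      have h := Aa_P2 (-1) (2*L+2) ((L:ℤ)+1) ((L:ℤ)+3)
      rw [show 2*L+2+1 = 2*L+3 from by omega, show (L:ℤ)+1-1 = (L:ℤ) from by ring,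
        show ((2*L+2:ℕ):ℤ)-((L:ℤ)+1)+(-1) = ((L:ℕ):ℤ) from by push_cast; ring, zpow_natCast,
        show (-1:ℤ)-1 = -2 from by norm_num] at h
      exact h
    -- hH : chi at t = 0, m = L+1
    have hH : Aa (-1) (2*L+1) (L:ℤ) ((L:ℤ)+3) + Aa 0 (2*L+1) ((L:ℤ)+1) ((L:ℤ)+3)
        + Aa 1 (2*L+1) ((L:ℤ)+2) ((L:ℤ)+3) = 0 := by
      have h := Aa_chi 0 (2*L+1) ((L:ℤ)+1) ((L:ℤ)+3) (by omega) (by push_cast; omega)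
      rw [show (0:ℤ)-1 = -1 from by norm_num, show (0:ℤ)+1 = 1 from by norm_num,
        show (L:ℤ)+1-1 = (L:ℤ) from by ring, show (L:ℤ)+1+1 = (L:ℤ)+2 from by ring] at h
      exact h
    -- hF
    have hF : Aa 0 (2*L+2) ((L:ℤ)+2) ((L:ℤ)+3)
        = Aa 0 (2*L+1) ((L:ℤ)+1) ((L:ℤ)+3)
          + Xq^(L+2) * Aa 1 (2*L+1) ((L:ℤ)+2) ((L:ℤ)+3) := by
      have h := Aa_P1 0 (2*L+1) ((L:ℤ)+2) ((L:ℤ)+3)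
      rw [show 2*L+1+1 = 2*L+2 from by omega, show (L:ℤ)+2-1 = (L:ℤ)+1 from by ring,
        show (L:ℤ)+2-0 = (((L+2:ℕ)):ℤ) from by push_cast; ring, zpow_natCast,
        show (0:ℤ)+1 = 1 from by norm_num] at h
      exact h
    -- hCnew
    have hCnew : Aa 0 (2*L+3) ((L:ℤ)+2) ((L:ℤ)+3)
        = Aa 0 (2*L+2) ((L:ℤ)+2) ((L:ℤ)+3)
          + Xq^L * Aa (-1) (2*L+2) ((L:ℤ)+1) ((L:ℤ)+3) := by
      have h := Aa_P2 0 (2*L+2) ((L:ℤ)+2) ((L:ℤ)+3)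
      rw [show 2*L+2+1 = 2*L+3 from by omega, show (L:ℤ)+2-1 = (L:ℤ)+1 from by ring,
        show ((2*L+2:ℕ):ℤ)-((L:ℤ)+2)+0 = ((L:ℕ):ℤ) from by push_cast; ring, zpow_natCast,
        show (0:ℤ)-1 = -1 from by norm_num] at h
      exact h
    constructor
    · rw [show 2*(L+1)+1 = 2*L+3 from by omega, show ((L+1:ℕ):ℤ) = (L:ℤ)+1 from by push_cast; ring,
        show (L:ℤ)+1+2 = (L:ℤ)+3 from by ring, Pp_succ]
      linear_combination hSnew + hU + Xq^L * hE + Xq^L * hG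
        + (1 - Xq^L + Xq^(2*L+2)) * hS3' + (Xq^(L+2) - Xq^L) * hC3'
    · rw [show 2*(L+1)+1 = 2*L+3 from by omega, show ((L+1:ℕ):ℤ)+1 = (L:ℤ)+2 from by push_cast; ring,
        show ((L+1:ℕ):ℤ)+2 = (L:ℤ)+3 from by push_cast; ring, Pp_succ]
      linear_combination hCnew + hF + Xq^(L+2) * hH + Xq^L * hU
        + (Xq^L - Xq^(L+2)) * hS3' + (1 - Xq^(L+2) + Xq^(2*L+2)) * hC3'


/-- Theorem 2.2: for `L ≥ 0`,
`∑_j q^{binom(j-1,2)} (j/3) [2L+1 choose L+j]_q = q^L ((-1;q³)_L/(-1;q)_L) (1+q-q^{L+1})`.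
The sum is taken over `-(L+1) ≤ j ≤ L+1`, which covers all nonzero terms. -/
theorem statement7 (L : ℕ) :
    ∑ j ∈ Finset.Icc (-(L : ℤ) - 1) ((L : ℤ) + 1),
      Xq ^ ((j - 1) * (j - 2) / 2) * (leg3 j : RatFunc ℚ) *
        qBinom Xq (2 * L + 1) ((L : ℤ) + j) =
    Xq ^ L * (qPoch (-1) (Xq ^ 3) L / qPoch (-1) Xq L) * (1 + Xq - Xq ^ (L + 1)) := by
  have hlhs : ∑ j ∈ Finset.Icc (-(L : ℤ) - 1) ((L : ℤ) + 1),
      Xq ^ ((j - 1) * (j - 2) / 2) * (leg3 j : RatFunc ℚ) *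
        qBinom Xq (2 * L + 1) ((L : ℤ) + j) = Aa (-1) (2*L+1) (L:ℤ) ((L:ℤ)+1) := by
    unfold Aa
    rw [show -(L:ℤ)-1 = -((L:ℤ)+1) from by ring]
    refine Finset.sum_congr rfl fun j _ => ?_
    rw [show (j+(-1))*(j+(-1)-1) = (j-1)*(j-2) from by ring,
      show (2 * (L:ℤ) + 1) = ((2*L+1 : ℕ) : ℤ) from by push_cast; ring]
  have hmono : Aa (-1) (2*L+1) (L:ℤ) ((L:ℤ)+2) = Aa (-1) (2*L+1) (L:ℤ) ((L:ℤ)+1) :=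
    Aa_mono (-1) (2*L+1) (L:ℤ) ((L:ℤ)+1) ((L:ℤ)+2) (by omega) (by omega) (by push_cast; omega)
  have hprod : qPoch (-1) (Xq^3) L = qPoch (-1) Xq L * Pp L := by
    rw [qPoch, qPoch, Pp, ← Finset.prod_mul_distrib]
    refine Finset.prod_congr rfl fun k _ => ?_
    ring
  have hden : qPoch (-1) Xq L ≠ 0 := by
    rw [qPoch]
    apply Finset.prod_ne_zero_iff.2
    intro k _ h
    exact Xq_pow_ne_neg_one k (by linear_combination h)
  have hratio : qPoch (-1) (Xq^3) L / qPoch (-1) Xq L = Pp L := by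
    rw [hprod, mul_comm, mul_div_assoc, div_self hden, mul_one]
  rw [hlhs, ← hmono, (key L).1, hratio]
  ring
end

section
/- For every non-negative integer L, \(\sum_{j=-\infty}^{\infty} (-1)^j q^{j^2} \left(\frac{j+1}{3}\right) \binom{2L+1}{L-j}_{q^2} = \frac{(q^3;q^6)_L}{(q;q^2)_L}\). The sum is finite since the q-binomial coefficient vanishes for j < -(L+1) and j > L. -/
/-! Let `ω` be a primitive cube root of unity, adjoined by passing to an algebraic closure.
Since `((j+1)/3) (ω - ω⁻¹) = ω^(j+1) - ω^(-(j+1))`, the left side times `ω - ω⁻¹` is a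
difference of two specializations `z = ω, ω⁻¹` of the finite triple product
`∑_j (-1)^j q^(j²) z^j [2L+1, L-j]_{q²} =`
`(-1)^L q^(L²) z^L ∏_{k ≤ 2L} (1 - z⁻¹ q^(2k+1-2L))`,
which is Rothe's q-binomial theorem after substituting `j = L - m`. At `z = ω` the factors with
exponents `±(2i+1)` pair up to `-ω⁻¹ q^(-(2i+1)) (1 + q^(2i+1) + q^(4i+2))`, and
`1 + u + u² = (1 - u³)/(1 - u)` is the ratio of the q-Pochhammer factors on the right. -/

open Finset

section QAnalogues

variable {F : Type*} [Field F]

noncomputable def qPochhammer (a q : F) (n : ℕ) : F := ∏ k ∈ range n, (1 - a * q ^ k)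

noncomputable def qChoose (p : F) (n k : ℕ) : F :=
  if k ≤ n then qPochhammer p p n / (qPochhammer p p k * qPochhammer p p (n - k)) else 0

section QChoose

variable {p : F}

theorem qPochhammer_succ (a q : F) (n : ℕ) :
    qPochhammer a q (n + 1) = qPochhammer a q n * (1 - a * q ^ n) :=
  prod_range_succ _ n

theorem one_sub_mul_pow_ne_zero_s10 (hp : ∀ n, p ^ (n + 1) ≠ 1) (n : ℕ) :
    1 - p * p ^ n ≠ 0 := by
  rw [sub_ne_zero, ← pow_succ']
  exact (hp n).symm

theorem qPochhammer_self_ne_zero (hp : ∀ n, p ^ (n + 1) ≠ 1) (n : ℕ) :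
    qPochhammer p p n ≠ 0 :=
  prod_ne_zero_iff.2 fun k _ ↦ one_sub_mul_pow_ne_zero_s10 hp k

theorem qChoose_zero_right (hp : ∀ n, p ^ (n + 1) ≠ 1) (n : ℕ) : qChoose p n 0 = 1 := by
  simpa [qChoose, qPochhammer] using qPochhammer_self_ne_zero hp n

theorem qChoose_self (hp : ∀ n, p ^ (n + 1) ≠ 1) (n : ℕ) : qChoose p n n = 1 := by
  simpa [qChoose, qPochhammer] using qPochhammer_self_ne_zero hp n

theorem qChoose_of_lt {n k : ℕ} (h : n < k) : qChoose p n k = 0 :=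
  if_neg h.not_ge

theorem qChoose_succ_succ (hp : ∀ n, p ^ (n + 1) ≠ 1) (n k : ℕ) :
    qChoose p (n + 1) (k + 1) = qChoose p n (k + 1) + p ^ (n - k) * qChoose p n k := by
  rcases lt_trichotomy k n with hlt | rfl | hgt
  · obtain ⟨e, rfl⟩ : ∃ e, n = k + 1 + e := ⟨n - (k + 1), by omega⟩
    simp only [qChoose, if_pos (by omega : k + 1 ≤ k + 1 + e + 1),
      if_pos (by omega : k + 1 ≤ k + 1 + e), if_pos (by omega : k ≤ k + 1 + e),
      show k + 1 + e + 1 - (k + 1) = e + 1 by omega, show k + 1 + e - (k + 1) = e by omega,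
      show k + 1 + e - k = e + 1 by omega, qPochhammer_succ]
    have := qPochhammer_self_ne_zero hp k
    have := qPochhammer_self_ne_zero hp e
    have := qPochhammer_self_ne_zero hp (k + 1 + e)
    have := one_sub_mul_pow_ne_zero_s10 hp k
    have := one_sub_mul_pow_ne_zero_s10 hp e
    have := one_sub_mul_pow_ne_zero_s10 hp (k + 1 + e)
    field_simp
    ring
  · simp [qChoose_self hp, qChoose_of_lt k.lt_succ_self]
  · simp [qChoose_of_lt hgt, qChoose_of_lt (Nat.succ_lt_succ hgt),
      qChoose_of_lt (hgt.trans k.lt_succ_self)]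

/-- Rothe's q-binomial theorem. -/
theorem sum_range_qChoose_mul_pow (hp : ∀ n, p ^ (n + 1) ≠ 1) (w : F) (n : ℕ) :
    ∑ k ∈ range (n + 1), p ^ k.choose 2 * w ^ k * qChoose p n k =
      ∏ k ∈ range n, (1 + w * p ^ k) := by
  induction n with
  | zero => simp [qChoose_zero_right hp]
  | succ n ih =>
    have hpad : ∑ k ∈ range (n + 1), p ^ k.choose 2 * w ^ k * qChoose p n k =
        ∑ k ∈ range (n + 1), p ^ (k + 1).choose 2 * w ^ (k + 1) * qChoose p n (k + 1) + 1 := by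
      have := sum_range_succ' (fun k ↦ p ^ k.choose 2 * w ^ k * qChoose p n k) (n + 1)
      rw [sum_range_succ, qChoose_of_lt n.lt_succ_self, mul_zero, add_zero] at this
      simpa [qChoose_zero_right hp] using this
    have hshift : ∀ k ∈ range (n + 1),
        p ^ (k + 1).choose 2 * w ^ (k + 1) * (p ^ (n - k) * qChoose p n k) =
          w * p ^ n * (p ^ k.choose 2 * w ^ k * qChoose p n k) := by
      intro k hk
      rw [Nat.choose_succ_succ', Nat.choose_one_right, pow_add, show p ^ n = p ^ k * p ^ (n - k) by
        rw [← pow_add, Nat.add_sub_cancel' (Nat.le_of_lt_succ (mem_range.1 hk))]]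
      ring
    rw [prod_range_succ, ← ih, sum_range_succ', qChoose_zero_right hp]
    simp only [qChoose_succ_succ hp, mul_add, sum_add_distrib, sum_congr rfl hshift, ← mul_sum,
      hpad, Nat.choose_zero_succ, pow_zero]
    ring

end QChoose

/-- At `F = RatFunc ℚ` this is `qBinom` by definition, as `qPochhammer` is `qPoch`. -/
noncomputable def qBinomial (q : F) (top bot : ℤ) : F :=
  if 0 ≤ bot ∧ bot ≤ top then
    qPochhammer q q top.toNat / (qPochhammer q q bot.toNat * qPochhammer q q (top - bot).toNat)
  else 0

theorem qBinomial_natCast (p : F) (n k : ℕ) : qBinomial p n k = qChoose p n k := by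
  by_cases h : k ≤ n
  · rw [qBinomial, qChoose, if_pos ⟨Int.natCast_nonneg k, by exact_mod_cast h⟩, if_pos h,
      ← Nat.cast_sub h, Int.toNat_natCast, Int.toNat_natCast, Int.toNat_natCast]
  · rw [qBinomial, qChoose, if_neg (by omega), if_neg h]

theorem map_qPochhammer {K : Type*} [Field K] (f : F →+* K) (a q : F) (n : ℕ) :
    f (qPochhammer a q n) = qPochhammer (f a) (f q) n := by
  simp [qPochhammer]

theorem map_qBinomial {K : Type*} [Field K] (f : F →+* K) (q : F) (top bot : ℤ) :
    f (qBinomial q top bot) = qBinomial (f q) top bot := by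
  unfold qBinomial
  split_ifs <;> simp [map_qPochhammer]

theorem two_mul_choose_two_add_self (m : ℕ) : 2 * m.choose 2 + m = m ^ 2 := by
  induction m with
  | zero => rfl
  | succ m ih => rw [Nat.choose_succ_succ', Nat.choose_one_right]; linarith

theorem neg_one_zpow_mul_zpow_sq_mul_zpow_sub {q : F} (hq0 : q ≠ 0) {z : F} (hz : z ≠ 0)
    (L m : ℕ) :
    (-1 : F) ^ ((L : ℤ) - m) * q ^ (((L : ℤ) - m) ^ 2) * z ^ ((L : ℤ) - m) =
      (-1) ^ L * q ^ (L ^ 2) * z ^ L *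
        ((q ^ 2) ^ m.choose 2 * (-(z⁻¹ * q ^ (1 - 2 * (L : ℤ)))) ^ m) := by
  have hexp :
      ((L : ℤ) - m) ^ 2 = (L ^ 2 : ℕ) + (2 * m.choose 2 : ℕ) + (1 - 2 * (L : ℤ)) * m := by
    have := congrArg (Nat.cast : ℕ → ℤ) (two_mul_choose_two_add_self m)
    push_cast at this ⊢
    linear_combination -this
  rw [hexp, zpow_add₀ hq0, zpow_add₀ hq0, zpow_mul, zpow_sub₀ hz,
    zpow_sub₀ (neg_ne_zero.2 one_ne_zero)]
  simp only [zpow_natCast, neg_pow (_ * _), mul_pow, inv_pow, pow_mul, div_eq_mul_inv]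
  field_simp
  rw [← pow_mul, pow_mul', neg_one_sq, one_pow]

theorem Icc_eq_image_sub (L : ℕ) :
    Icc (-(L : ℤ) - 1) L = (range (2 * L + 2)).image fun m : ℕ ↦ (L : ℤ) - m := by
  ext j
  simp only [mem_Icc, mem_image, mem_range]
  exact ⟨fun h ↦ ⟨(L - j).toNat, by omega, by omega⟩, by rintro ⟨m, hm, rfl⟩; omega⟩

/-- A finite form of Jacobi's triple product identity. -/
theorem sum_Icc_zpow_mul_qBinomial {q : F} (hq0 : q ≠ 0) (hq : ∀ n, q ^ (n + 1) ≠ 1) {z : F}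
    (hz : z ≠ 0) (L : ℕ) :
    ∑ j ∈ Icc (-(L : ℤ) - 1) L,
        (-1 : F) ^ j * q ^ (j ^ 2) * z ^ j * qBinomial (q ^ 2) (2 * L + 1) (L - j) =
      (-1) ^ L * q ^ (L ^ 2) * z ^ L *
        ∏ k ∈ range (2 * L + 1), (1 - z⁻¹ * q ^ (2 * (k : ℤ) + 1 - 2 * L)) := by
  have hq2 : ∀ n, (q ^ 2) ^ (n + 1) ≠ 1 := fun n ↦ by rw [← pow_mul]; exact hq (2 * n + 1)
  set w := -(z⁻¹ * q ^ (1 - 2 * (L : ℤ)))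
  have hterm : ∀ m : ℕ,
      (-1 : F) ^ ((L : ℤ) - m) * q ^ (((L : ℤ) - m) ^ 2) * z ^ ((L : ℤ) - m) *
      qBinomial (q ^ 2) (2 * L + 1) (L - (L - m)) =
      (-1) ^ L * q ^ (L ^ 2) * z ^ L *
        ((q ^ 2) ^ m.choose 2 * w ^ m * qChoose (q ^ 2) (2 * L + 1) m) := by
    intro m
    rw [neg_one_zpow_mul_zpow_sq_mul_zpow_sub hq0 hz, sub_sub_cancel, ← qBinomial_natCast]
    push_cast
    ring
  rw [Icc_eq_image_sub, sum_image fun a _ b _ h ↦ by simpa using h]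
  simp only [hterm, ← mul_sum, sum_range_qChoose_mul_pow hq2]
  congr 1
  refine prod_congr rfl fun k _ ↦ ?_
  rw [← zpow_natCast, ← zpow_natCast, ← zpow_mul, neg_mul, mul_assoc, ← zpow_add₀ hq0]
  ring_nf

theorem prod_range_pow_two_mul_add_one (q : F) (L : ℕ) :
    ∏ i ∈ range L, q ^ (2 * i + 1) = q ^ (L ^ 2) := by
  induction L with
  | zero => simp
  | succ L ih => rw [prod_range_succ, ih, ← pow_add]; ring_nf

namespace IsPrimitiveRoot

variable {c : F}

theorem sq_add_self_add_one_eq_zero (hc : IsPrimitiveRoot c 3) : c ^ 2 + c + 1 = 0 := by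
  have := hc.geom_sum_eq_zero (by norm_num)
  simp only [sum_range_succ, sum_range_zero] at this
  linear_combination this

theorem one_sub_inv_mul_inv_mul_one_sub_inv_mul (hc : IsPrimitiveRoot c 3) {u : F} (hu : u ≠ 0) :
    (1 - c⁻¹ * u⁻¹) * (1 - c⁻¹ * u) = -c⁻¹ * u⁻¹ * (1 + u + u ^ 2) := by
  have hc0 : c ≠ 0 := hc.ne_zero (by norm_num)
  field_simp
  linear_combination u * hc.sq_add_self_add_one_eq_zero

theorem prod_one_sub_inv_mul_zpow (hc : IsPrimitiveRoot c 3) {q : F} (hq0 : q ≠ 0) (L : ℕ) :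
    ∏ k ∈ range (2 * L + 1), (1 - c⁻¹ * q ^ (2 * (k : ℤ) + 1 - 2 * L)) =
      (1 - c⁻¹ * q ^ (2 * L + 1)) * ((-c⁻¹) ^ L * (q ^ (L ^ 2))⁻¹ *
        ∏ k ∈ range L, (1 + q ^ (2 * k + 1) + (q ^ (2 * k + 1)) ^ 2)) := by
  have hpair : ∀ i ∈ range L, (1 - c⁻¹ * q ^ (2 * ((L - 1 - i : ℕ) : ℤ) + 1 - 2 * L)) *
      (1 - c⁻¹ * q ^ (2 * ((L + i : ℕ) : ℤ) + 1 - 2 * L)) =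
      -c⁻¹ * (q ^ (2 * i + 1))⁻¹ * (1 + q ^ (2 * i + 1) + (q ^ (2 * i + 1)) ^ 2) := by
    intro i hi
    rw [mem_range] at hi
    rw [show 2 * ((L - 1 - i : ℕ) : ℤ) + 1 - 2 * L = -((2 * i + 1 : ℕ) : ℤ) by omega,
      show 2 * ((L + i : ℕ) : ℤ) + 1 - 2 * L = ((2 * i + 1 : ℕ) : ℤ) by omega,
      zpow_neg, zpow_natCast]
    exact hc.one_sub_inv_mul_inv_mul_one_sub_inv_mul (pow_ne_zero _ hq0)
  rw [prod_range_succ, two_mul, prod_range_add, ← prod_range_reflect _ L, ← prod_mul_distrib,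
    prod_congr rfl hpair, prod_mul_distrib, prod_mul_distrib, prod_const, card_range,
    prod_inv_distrib, prod_range_pow_two_mul_add_one, mul_comm]
  congr 2
  rw [← zpow_natCast]
  push_cast
  ring_nf

theorem sum_Icc_zpow_mul_qBinomial (hc : IsPrimitiveRoot c 3) {q : F} (hq0 : q ≠ 0)
    (hq : ∀ n, q ^ (n + 1) ≠ 1) (L : ℕ) :
    ∑ j ∈ Icc (-(L : ℤ) - 1) L,
        (-1 : F) ^ j * q ^ (j ^ 2) * c ^ j * qBinomial (q ^ 2) (2 * L + 1) (L - j) =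
      (1 - c⁻¹ * q ^ (2 * L + 1)) *
        ∏ k ∈ range L, (1 + q ^ (2 * k + 1) + (q ^ (2 * k + 1)) ^ 2) := by
  have hc0 : c ≠ 0 := hc.ne_zero (by norm_num)
  rw [_root_.sum_Icc_zpow_mul_qBinomial hq0 hq hc0, hc.prod_one_sub_inv_mul_zpow hq0,
    neg_pow c⁻¹, inv_pow]
  field_simp
  rw [← pow_mul, pow_mul', neg_one_sq, one_pow, one_mul]

theorem leg3_mul_sub_inv (hc : IsPrimitiveRoot c 3) (i : ℤ) :
    (leg3 i : F) * (c - c⁻¹) = c ^ i - c⁻¹ ^ i := by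
  have hc0 : c ≠ 0 := hc.ne_zero (by norm_num)
  have hc3 : c ^ 3 = 1 := hc.pow_eq_one
  have hper : c ^ i = c ^ (i % 3) := by
    conv_lhs => rw [← Int.emod_add_mul_ediv i 3, zpow_add₀ hc0, zpow_mul]
    norm_num [hc3]
  rw [inv_zpow, hper, leg3]
  have h0 := Int.emod_nonneg i (by norm_num : (3 : ℤ) ≠ 0)
  have h3 := Int.emod_lt_of_pos i (by norm_num : (0 : ℤ) < 3)
  interval_cases i % 3
  · simp
  · simp
  · field_simp
    norm_num
    linear_combination (-1 - c) * hc3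

theorem sum_leg3_mul_qBinomial (hc : IsPrimitiveRoot c 3) {q : F} (hq0 : q ≠ 0)
    (hq : ∀ n, q ^ (n + 1) ≠ 1) (L : ℕ) :
    ∑ j ∈ Icc (-(L : ℤ) - 1) L,
        (-1 : F) ^ j * q ^ (j ^ 2) * (leg3 (j + 1) : F) * qBinomial (q ^ 2) (2 * L + 1) (L - j) =
      ∏ k ∈ range L, (1 + q ^ (2 * k + 1) + (q ^ (2 * k + 1)) ^ 2) := by
  have hc0 : c ≠ 0 := hc.ne_zero (by norm_num)
  have hne : c - c⁻¹ ≠ 0 := by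
    refine sub_ne_zero.2 fun h ↦
      hc.pow_ne_one_of_pos_of_lt (l := 2) (by norm_num) (by norm_num) ?_
    rw [sq]
    nth_rw 2 [h]
    exact mul_inv_cancel₀ hc0
  set P := ∏ k ∈ range L, (1 + q ^ (2 * k + 1) + (q ^ (2 * k + 1)) ^ 2)
  apply mul_right_cancel₀ hne
  calc _ = c * ∑ j ∈ Icc (-(L : ℤ) - 1) L,
          (-1 : F) ^ j * q ^ (j ^ 2) * c ^ j * qBinomial (q ^ 2) (2 * L + 1) (L - j) -
        c⁻¹ * ∑ j ∈ Icc (-(L : ℤ) - 1) L,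
          (-1 : F) ^ j * q ^ (j ^ 2) * c⁻¹ ^ j * qBinomial (q ^ 2) (2 * L + 1) (L - j) := by
        rw [sum_mul, mul_sum, mul_sum, ← sum_sub_distrib]
        refine sum_congr rfl fun j _ ↦ ?_
        rw [mul_right_comm, mul_assoc _ (leg3 (j + 1) : F), hc.leg3_mul_sub_inv,
          zpow_add_one₀ hc0, zpow_add_one₀ (inv_ne_zero hc0)]
        ring
    _ = c * ((1 - c⁻¹ * q ^ (2 * L + 1)) * P) -
          c⁻¹ * ((1 - c⁻¹⁻¹ * q ^ (2 * L + 1)) * P) := by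
        rw [hc.sum_Icc_zpow_mul_qBinomial hq0 hq, hc.inv.sum_Icc_zpow_mul_qBinomial hq0 hq]
    _ = P * (c - c⁻¹) := by
        rw [inv_inv]
        field_simp
        ring

end IsPrimitiveRoot

theorem sum_leg3_mul_qBinomial [NeZero (3 : F)] {q : F} (hq0 : q ≠ 0)
    (hq : ∀ n, q ^ (n + 1) ≠ 1) (L : ℕ) :
    ∑ j ∈ Icc (-(L : ℤ) - 1) L,
        (-1 : F) ^ j * q ^ (j ^ 2) * (leg3 (j + 1) : F) * qBinomial (q ^ 2) (2 * L + 1) (L - j) =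
      ∏ k ∈ range L, (1 + q ^ (2 * k + 1) + (q ^ (2 * k + 1)) ^ 2) := by
  obtain ⟨c, hc⟩ := HasEnoughRootsOfUnity.exists_primitiveRoot (AlgebraicClosure F) 3
  let f := algebraMap F (AlgebraicClosure F)
  have hfq : ∀ n, f q ^ (n + 1) ≠ 1 := fun n ↦ by
    rw [← map_pow, ← map_one f, f.injective.ne_iff]
    exact hq n
  apply f.injective
  simpa [map_qBinomial] using hc.sum_leg3_mul_qBinomial ((map_ne_zero f).2 hq0) hfq L

theorem qPochhammer_div_qPochhammer_eq_prod {q : F} (hq : ∀ n, q ^ (n + 1) ≠ 1) (L : ℕ) :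
    qPochhammer (q ^ 3) (q ^ 6) L / qPochhammer q (q ^ 2) L =
      ∏ k ∈ range L, (1 + q ^ (2 * k + 1) + (q ^ (2 * k + 1)) ^ 2) := by
  rw [qPochhammer, qPochhammer, ← prod_div_distrib]
  refine prod_congr rfl fun k _ ↦ ?_
  have hk : 1 - q * (q ^ 2) ^ k ≠ 0 := by
    rw [sub_ne_zero, ← pow_mul, ← pow_succ']
    exact (hq (2 * k)).symm
  rw [div_eq_iff hk]
  ring

end QAnalogues

theorem RatFunc.X_pow_succ_ne_one (n : ℕ) : (RatFunc.X : RatFunc ℚ) ^ (n + 1) ≠ 1 := by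
  rw [← RatFunc.algebraMap_X, ← map_pow,
    ← map_one (algebraMap (Polynomial ℚ) (RatFunc ℚ)),
    (IsFractionRing.injective (Polynomial ℚ) (RatFunc ℚ)).ne_iff]
  intro h
  simpa using congrArg Polynomial.natDegree h

/-- Theorem 2.5: for `L ≥ 0`,
`∑_j (-1)^j q^{j²} ((j+1)/3) [2L+1 choose L-j]_{q²} = (q³;q⁶)_L/(q;q²)_L`.
The sum is taken over `-(L+1) ≤ j ≤ L`, which covers all nonzero terms. -/
theorem statement10 (L : ℕ) :
    ∑ j ∈ Finset.Icc (-(L : ℤ) - 1) (L : ℤ),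
      (-1 : RatFunc ℚ) ^ j * Xq ^ (j ^ 2) * (leg3 (j + 1) : RatFunc ℚ) *
        qBinom (Xq ^ 2) (2 * L + 1) ((L : ℤ) - j) =
    qPoch (Xq ^ 3) (Xq ^ 6) L / qPoch Xq (Xq ^ 2) L :=
  (sum_leg3_mul_qBinomial RatFunc.X_ne_zero RatFunc.X_pow_succ_ne_one L).trans
    (qPochhammer_div_qPochhammer_eq_prod RatFunc.X_pow_succ_ne_one L).symm
end
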